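/- arXiv:2411.12786 — 5 statements merged into one kernel-verified Lean document; each statement's English description precedes it below -/
import Mathlib

section
/- Under the adaptive data-collection setup, the oracle estimator τ̂ₙ^{f*}(O_n) := (1/n) Σ_{i=1}^n { g(X_i,A_i)(Y_i − μ*(X_i,A_i)) / π*_i(X_i,O_{i-1};A_i) + ⟨g(X_i,·), μ*(X_i,·)⟩_{λ_A} } satisfies n·Var_{I*}[τ̂ₙ^{f*}(O_n)] = v*², where v*² := Var_{X~Ξ*}[⟨g(X,·),μ*(X,·)⟩_{λ_A}] + ‖σ‖_(n)². -/
/-!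
Write the estimator as `T = (1/n) ∑ tᵢ` with `tᵢ = Dᵢ + f̄(Xᵢ)`, where
`Dᵢ = g(Xᵢ,Aᵢ)(Yᵢ - μ*(Xᵢ,Aᵢ))/πᵢ` and `f̄(x) = ⟨g(x,·), μ*(x,·)⟩`. Given the observations
before stage `i`, the `i`-th one is drawn from `Ξ* ⊗ πᵢ ⊗ Γ*`. Hence `Dᵢ` has conditional mean zero
and conditional second moment `g²σ²/πᵢ²`, while `Xᵢ ~ Ξ*` whatever the past. So the `tᵢ` are
uncorrelated, `Var tᵢ = E[g²σ²/πᵢ²] + Var_Ξ* f̄`, and `n Var T = (1/n) ∑ Var tᵢ = v*²`.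

The conditioning is Fubini on the product density of the trajectory, integrating out the later
coordinates one at a time. `Dᵢ` is square integrable because `g Yᵢ/πᵢ` is: the conditional
variance of `Yᵢ` is at most its conditional second moment.
-/

open MeasureTheory ProbabilityTheory
open scoped ENNReal

noncomputable section

open Function

lemma DependsOn.apply_update_of_notMem {ι β : Type*} {α : ι → Type*} [DecidableEq ι]
    {f : (∀ i, α i) → β} {s : Set ι} (hf : DependsOn f s) {i : ι} (hi : i ∉ s)
    (x : ∀ i, α i) (y : α i) : f (Function.update x i y) = f x :=
  hf fun _ hj => update_of_ne (ne_of_mem_of_not_mem hj hi) _ _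

lemma DependsOn.fun_comp {ι β γ : Type*} {α : ι → Type*} {f : (∀ i, α i) → β} {s : Set ι}
    (hf : DependsOn f s) (g : β → γ) : DependsOn (fun x => g (f x)) s :=
  fun _ _ h => congrArg g (hf h)

lemma MeasureTheory.lintegral_ofReal_eq_one {α : Type*} [MeasurableSpace α] {μ : Measure α}
    {f : α → ℝ} (hf : ∀ x, 0 ≤ f x) (h : ∫ x, f x ∂μ = 1) :
    ∫⁻ x, ENNReal.ofReal (f x) ∂μ = 1 := by
  rw [← ofReal_integral_eq_lintegral_ofReal (integrable_of_integral_eq_one h) (ae_of_all _ hf), h,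
    ENNReal.ofReal_one]

lemma ProbabilityTheory.evariance_le_lintegral_sq {α : Type*} [MeasurableSpace α]
    {μ : Measure α} [IsProbabilityMeasure μ] {Y : α → ℝ} (hY : AEStronglyMeasurable Y μ) :
    evariance Y μ ≤ ∫⁻ ω, ENNReal.ofReal (Y ω ^ 2) ∂μ := by
  by_cases hL2 : MemLp Y 2 μ
  · rw [← ofReal_variance hL2, ← ofReal_integral_eq_lintegral_ofReal hL2.integrable_sq
      (ae_of_all _ fun _ => sq_nonneg _)]
    exact ENNReal.ofReal_le_ofReal (variance_le_expectation_sq hY)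
  · have hinf : ¬ HasFiniteIntegral (fun ω => Y ω ^ 2) μ := fun h =>
      hL2 ((memLp_two_iff_integrable_sq hY).2 ⟨hY.pow 2, h⟩)
    rw [hasFiniteIntegral_iff_ofReal (ae_of_all _ fun _ => sq_nonneg _), not_lt, top_le_iff]
      at hinf
    exact hinf ▸ le_top

/-- `pi i x o a` is the policy density `πᵢ(x, O_{i-1}; a)` evaluated on a whole trajectory `o`;
`pi_dependsOn` says that only the observations before stage `i` are read. -/
structure AdaptiveDesign (X A : Type*) [MeasurableSpace X] [MeasurableSpace A] (n : ℕ) where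
  lamX : Measure X
  lamA : Measure A
  lamY : Measure ℝ
  [sigmaFinite_lamX : SigmaFinite lamX]
  [sigmaFinite_lamA : SigmaFinite lamA]
  [sigmaFinite_lamY : SigmaFinite lamY]
  xi : X → ℝ
  measurable_xi : Measurable xi
  xi_nonneg : ∀ x, 0 ≤ xi x
  integral_xi : ∫ x, xi x ∂lamX = 1
  pi : Fin n → X → (Fin n → X × A × ℝ) → A → ℝ
  measurable_pi : ∀ i, Measurable fun p : X × (Fin n → X × A × ℝ) × A => pi i p.1 p.2.1 p.2.2
  pi_nonneg : ∀ i x o a, 0 ≤ pi i x o a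
  pi_dependsOn : ∀ i x a, DependsOn (fun o => pi i x o a) (Set.Iio i)
  integral_pi : ∀ i x o, ∫ a, pi i x o a ∂lamA = 1
  gam : X → A → ℝ → ℝ
  measurable_gam : Measurable fun p : (X × A) × ℝ => gam p.1.1 p.1.2 p.2
  gam_nonneg : ∀ x a y, 0 ≤ gam x a y
  integral_gam : ∀ x a, ∫ y, gam x a y ∂lamY = 1
  g : X → A → ℝ
  measurable_g : Measurable fun p : X × A => g p.1 p.2

attribute [instance] AdaptiveDesign.sigmaFinite_lamX AdaptiveDesign.sigmaFinite_lamA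
  AdaptiveDesign.sigmaFinite_lamY

namespace AdaptiveDesign

variable {X A : Type*} [MeasurableSpace X] [MeasurableSpace A] {n : ℕ} (M : AdaptiveDesign X A n)

local notation "Ω" => Fin n → X × A × ℝ

def nu : Measure (X × A × ℝ) := M.lamX.prod (M.lamA.prod M.lamY)

instance : SigmaFinite M.nu := by unfold nu; infer_instance

def stepDensity (k : Fin n) (o : Ω) (v : X × A × ℝ) : ℝ :=
  M.xi v.1 * M.pi k v.1 o v.2.1 * M.gam v.1 v.2.1 v.2.2

def trajDensity (s : Finset (Fin n)) (o : Ω) : ℝ≥0∞ :=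
  ∏ j ∈ s, ENNReal.ofReal (M.stepDensity j o (o j))

def P : Measure Ω :=
  (Measure.pi fun _ => M.nu).withDensity fun o => ENNReal.ofReal (∏ i, M.stepDensity i o (o i))

def Xi : Measure X := M.lamX.withDensity fun x => ENNReal.ofReal (M.xi x)

def stepKernel (k : Fin n) : Kernel Ω (X × A × ℝ) :=
  Kernel.withDensity (Kernel.const _ M.nu) fun o v => ENNReal.ofReal (M.stepDensity k o v)

def mu (x : X) (a : A) : ℝ := ∫ y, y * M.gam x a y ∂M.lamY

def sig2 (x : X) (a : A) : ℝ := ∫ y, (y - M.mu x a) ^ 2 * M.gam x a y ∂M.lamY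

def fbar (x : X) : ℝ := ∫ a, M.g x a * M.mu x a ∂M.lamA

section Measurability

variable {M} in
lemma measurable_context (i : Fin n) : Measurable fun o : Ω => (o i).1 :=
  (measurable_pi_apply i).fst

variable {M} in
lemma measurable_outcome (i : Fin n) : Measurable fun o : Ω => (o i).2.2 :=
  (measurable_pi_apply i).snd.snd

variable {M} in
lemma measurable_obs (i : Fin n) : Measurable fun o : Ω => ((o i).1, (o i).2.1) :=
  (measurable_context i).prodMk (measurable_pi_apply i).snd.fst

lemma measurable_pi_obs (i : Fin n) : Measurable fun o : Ω => M.pi i (o i).1 o (o i).2.1 :=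
  (M.measurable_pi i).comp ((measurable_context i).prodMk
    (measurable_id.prodMk (measurable_pi_apply i).snd.fst))

lemma measurable_pi_slice (k : Fin n) (x : X) (o : Ω) : Measurable (M.pi k x o) :=
  (M.measurable_pi k).fun_comp (measurable_const.prodMk (measurable_const.prodMk measurable_id))

lemma measurable_gam_slice (x : X) (a : A) : Measurable (M.gam x a) :=
  M.measurable_gam.fun_comp (measurable_prodMk_left (x := (x, a)))

lemma measurable_stepDensity (k : Fin n) : Measurable fun p : Ω × (X × A × ℝ) => M.stepDensity k p.1 p.2 :=
  ((M.measurable_xi.comp measurable_snd.fst).mul ((M.measurable_pi k).comp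
    (measurable_snd.fst.prodMk (measurable_fst.prodMk measurable_snd.snd.fst)))).mul
    (M.measurable_gam.comp ((measurable_snd.fst.prodMk measurable_snd.snd.fst).prodMk
      measurable_snd.snd.snd))

lemma measurable_stepDensity_apply (k : Fin n) (o : Ω) : Measurable (M.stepDensity k o) :=
  (M.measurable_stepDensity k).comp measurable_prodMk_left

lemma measurable_trajDensity (s : Finset (Fin n)) : Measurable (M.trajDensity s) :=
  Finset.measurable_prod _ fun j _ =>
    ((M.measurable_stepDensity j).comp (measurable_id.prodMk (measurable_pi_apply j))).ennreal_ofReal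

lemma measurable_mu : Measurable fun p : X × A => M.mu p.1 p.2 :=
  (measurable_snd.mul M.measurable_gam).stronglyMeasurable.integral_prod_right'.measurable

lemma measurable_sig2 : Measurable fun p : X × A => M.sig2 p.1 p.2 :=
  ((((measurable_snd.sub (M.measurable_mu.comp measurable_fst)).pow_const 2).mul
    M.measurable_gam).stronglyMeasurable.integral_prod_right').measurable

lemma measurable_fbar : Measurable M.fbar :=
  (M.measurable_g.mul M.measurable_mu).stronglyMeasurable.integral_prod_right'.measurable

end Measurability

section StepKernel

lemma stepDensity_nonneg (k : Fin n) (o : Ω) (v : X × A × ℝ) : 0 ≤ M.stepDensity k o v :=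
  mul_nonneg (mul_nonneg (M.xi_nonneg _) (M.pi_nonneg _ _ _ _)) (M.gam_nonneg _ _ _)

lemma stepKernel_apply (k : Fin n) (o : Ω) :
    M.stepKernel k o = M.nu.withDensity fun v => ENNReal.ofReal (M.stepDensity k o v) := by
  rw [stepKernel, Kernel.withDensity_apply _ (M.measurable_stepDensity k).ennreal_ofReal,
    Kernel.const_apply]

lemma lintegral_stepKernel (k : Fin n) (o : Ω) (h : X × A × ℝ → ℝ≥0∞) (hh : Measurable h) :
    ∫⁻ v, h v ∂M.stepKernel k o
      = ∫⁻ x, ENNReal.ofReal (M.xi x) * ∫⁻ a, ENNReal.ofReal (M.pi k x o a)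
          * ∫⁻ y, ENNReal.ofReal (M.gam x a y) * h (x, a, y) ∂M.lamY ∂M.lamA ∂M.lamX := by
  have hmeas : Measurable fun v => ENNReal.ofReal (M.stepDensity k o v) * h v :=
    (M.measurable_stepDensity_apply k o).ennreal_ofReal.mul hh
  rw [stepKernel_apply, lintegral_withDensity_eq_lintegral_mul _
    (M.measurable_stepDensity_apply k o).ennreal_ofReal hh, nu]
  simp only [Pi.mul_apply]
  rw [lintegral_prod _ hmeas.aemeasurable]
  refine lintegral_congr fun x => ?_
  rw [lintegral_prod _ (hmeas.fun_comp measurable_prodMk_left).aemeasurable,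
    ← lintegral_const_mul' _ _ ENNReal.ofReal_ne_top]
  refine lintegral_congr fun a => ?_
  rw [← lintegral_const_mul' _ _ ENNReal.ofReal_ne_top, ← lintegral_const_mul' _ _
    ENNReal.ofReal_ne_top]
  refine lintegral_congr fun y => ?_
  rw [stepDensity, ENNReal.ofReal_mul (mul_nonneg (M.xi_nonneg _) (M.pi_nonneg _ _ _ _)),
    ENNReal.ofReal_mul (M.xi_nonneg _)]
  ring

instance : IsProbabilityMeasure M.Xi :=
  ⟨by rw [Xi, withDensity_apply _ MeasurableSet.univ, Measure.restrict_univ,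
    lintegral_ofReal_eq_one M.xi_nonneg M.integral_xi]⟩

lemma lintegral_ofReal_gam_mul_const (x : X) (a : A) (c : ℝ≥0∞) :
    ∫⁻ y, ENNReal.ofReal (M.gam x a y) * c ∂M.lamY = c := by
  rw [lintegral_mul_const _ (M.measurable_gam_slice x a).ennreal_ofReal,
    lintegral_ofReal_eq_one (M.gam_nonneg x a) (M.integral_gam x a), one_mul]

lemma lintegral_ofReal_pi_mul_const (k : Fin n) (x : X) (o : Ω) (c : ℝ≥0∞) :
    ∫⁻ a, ENNReal.ofReal (M.pi k x o a) * c ∂M.lamA = c := by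
  rw [lintegral_mul_const _ (M.measurable_pi_slice k x o).ennreal_ofReal,
    lintegral_ofReal_eq_one (M.pi_nonneg k x o) (M.integral_pi k x o), one_mul]

lemma lintegral_stepKernel_comp_fst (k : Fin n) (o : Ω) {φ : X → ℝ≥0∞} (hφ : Measurable φ) :
    ∫⁻ v, φ v.1 ∂M.stepKernel k o = ∫⁻ x, φ x ∂M.Xi := by
  rw [M.lintegral_stepKernel k o (fun v => φ v.1) (hφ.comp measurable_fst), Xi,
    lintegral_withDensity_eq_lintegral_mul _ M.measurable_xi.ennreal_ofReal hφ]
  simp only [lintegral_ofReal_gam_mul_const, lintegral_ofReal_pi_mul_const, Pi.mul_apply]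

instance (k : Fin n) : IsMarkovKernel (M.stepKernel k) :=
  ⟨fun o => ⟨by
    simpa using M.lintegral_stepKernel_comp_fst k o (φ := fun _ => 1) measurable_const⟩⟩

lemma map_fst_stepKernel (k : Fin n) (o : Ω) : (M.stepKernel k o).map Prod.fst = M.Xi := by
  ext s hs
  rw [Measure.map_apply measurable_fst hs, ← lintegral_indicator_one (measurable_fst hs),
    ← lintegral_indicator_one hs]
  exact M.lintegral_stepKernel_comp_fst k o (measurable_const.indicator hs)

lemma integral_stepKernel_comp_fst (k : Fin n) (o : Ω) {φ : X → ℝ} (hφ : Measurable φ) :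
    ∫ v, φ v.1 ∂M.stepKernel k o = ∫ x, φ x ∂M.Xi := by
  rw [← M.map_fst_stepKernel k o, integral_map measurable_fst.aemeasurable hφ.aestronglyMeasurable]

lemma integral_stepKernel (k : Fin n) (o : Ω) {h : X × A × ℝ → ℝ}
    (hint : Integrable h (M.stepKernel k o)) :
    ∫ v, h v ∂M.stepKernel k o
      = ∫ x, M.xi x * ∫ a, M.pi k x o a
          * ∫ y, M.gam x a y * h (x, a, y) ∂M.lamY ∂M.lamA ∂M.lamX := by
  have hden : (fun v => ENNReal.ofReal (M.stepDensity k o v))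
      = fun v => ((M.stepDensity k o v).toNNReal : ℝ≥0∞) := rfl
  rw [stepKernel_apply, hden, integrable_withDensity_iff_integrable_smul
    (M.measurable_stepDensity_apply k o).real_toNNReal] at hint
  rw [stepKernel_apply, hden, integral_withDensity_eq_integral_smul
    (M.measurable_stepDensity_apply k o).real_toNNReal]
  simp only [NNReal.smul_def, Real.coe_toNNReal _ (M.stepDensity_nonneg k o _), smul_eq_mul, nu]
    at hint ⊢
  rw [integral_prod _ hint]
  refine integral_congr_ae (hint.prod_right_ae.mono fun x hx => ?_)
  simp only [stepDensity] at hx ⊢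
  rw [integral_prod _ hx, ← integral_const_mul]
  refine integral_congr_ae (ae_of_all _ fun a => ?_)
  dsimp only
  rw [← integral_const_mul, ← integral_const_mul]
  congr 1
  ext y
  ring

lemma integral_gam_mul_sub_mu (x : X) (a : A) :
    ∫ y, M.gam x a y * (y - M.mu x a) ∂M.lamY = 0 := by
  have hsplit : (fun y => M.gam x a y * (y - M.mu x a))
      = fun y => y * M.gam x a y - M.mu x a * M.gam x a y := by
    ext y; ring
  have hgam := integrable_of_integral_eq_one (M.integral_gam x a)
  by_cases hint : Integrable (fun y => y * M.gam x a y) M.lamY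
  · rw [hsplit, integral_sub hint (hgam.const_mul _), integral_const_mul, M.integral_gam, mul_one,
      mu, sub_self]
  · refine integral_undef fun h => hint ?_
    rw [hsplit] at h
    refine (h.add (hgam.const_mul (M.mu x a))).congr (ae_of_all _ fun y => ?_)
    simp only [Pi.add_apply]
    ring

lemma integral_stepKernel_residual (k : Fin n) (o : Ω) (ψ : X → A → ℝ) :
    ∫ v, ψ v.1 v.2.1 * (v.2.2 - M.mu v.1 v.2.1) ∂M.stepKernel k o = 0 := by
  by_cases hint : Integrable (fun v => ψ v.1 v.2.1 * (v.2.2 - M.mu v.1 v.2.1)) (M.stepKernel k o)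
  · rw [M.integral_stepKernel k o hint]
    simp only [mul_left_comm (M.gam _ _ _), integral_const_mul, integral_gam_mul_sub_mu, mul_zero,
      integral_zero]
  · exact integral_undef hint

lemma integral_stepKernel_sq_residual (k : Fin n) (o : Ω) (ψ : X → A → ℝ)
    (h₁ : Integrable (fun v => (ψ v.1 v.2.1 * (v.2.2 - M.mu v.1 v.2.1)) ^ 2) (M.stepKernel k o))
    (h₂ : Integrable (fun v => ψ v.1 v.2.1 ^ 2 * M.sig2 v.1 v.2.1) (M.stepKernel k o)) :
    ∫ v, (ψ v.1 v.2.1 * (v.2.2 - M.mu v.1 v.2.1)) ^ 2 ∂M.stepKernel k o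
      = ∫ v, ψ v.1 v.2.1 ^ 2 * M.sig2 v.1 v.2.1 ∂M.stepKernel k o := by
  have hy : ∀ x a, ∫ y, M.gam x a y * (ψ x a * (y - M.mu x a)) ^ 2 ∂M.lamY
      = ∫ y, M.gam x a y * (ψ x a ^ 2 * M.sig2 x a) ∂M.lamY := by
    intro x a
    rw [integral_mul_const, M.integral_gam, one_mul, sig2, ← integral_const_mul]
    congr 1
    ext y
    ring
  rw [M.integral_stepKernel k o h₁, M.integral_stepKernel k o h₂]
  simp_rw [hy]

lemma lintegral_gam_sq_sub_mu_le (x : X) (a : A) :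
    ∫⁻ y, ENNReal.ofReal (M.gam x a y) * ENNReal.ofReal ((y - M.mu x a) ^ 2) ∂M.lamY
      ≤ ∫⁻ y, ENNReal.ofReal (M.gam x a y) * ENNReal.ofReal (y ^ 2) ∂M.lamY := by
  have hγ := (M.measurable_gam_slice x a).ennreal_ofReal
  set ν := M.lamY.withDensity fun y => ENNReal.ofReal (M.gam x a y)
  have : IsProbabilityMeasure ν := ⟨by
    rw [withDensity_apply _ MeasurableSet.univ, Measure.restrict_univ]
    exact lintegral_ofReal_eq_one (M.gam_nonneg x a) (M.integral_gam x a)⟩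
  have hmean : ∫ y, id y ∂ν = M.mu x a := by
    simp only [ν, id, integral_withDensity_eq_integral_toReal_smul hγ
      (ae_of_all _ fun _ => ENNReal.ofReal_lt_top), ENNReal.toReal_ofReal (M.gam_nonneg x a _),
      smul_eq_mul, mu, mul_comm]
  have h := evariance_le_lintegral_sq (μ := ν) aestronglyMeasurable_id
  rw [evariance_eq_lintegral_ofReal, hmean] at h
  simp only [id] at h
  rwa [lintegral_withDensity_eq_lintegral_mul _ hγ
    (g := fun y => ENNReal.ofReal ((y - M.mu x a) ^ 2)) (by fun_prop),
    lintegral_withDensity_eq_lintegral_mul _ hγ (g := fun y => ENNReal.ofReal (y ^ 2))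
      (by fun_prop)] at h

lemma lintegral_stepKernel_sq_residual_le (k : Fin n) (o : Ω) {ψ : X → A → ℝ}
    (hψ : Measurable fun p : X × A => ψ p.1 p.2) :
    ∫⁻ v, ENNReal.ofReal ((ψ v.1 v.2.1 * (v.2.2 - M.mu v.1 v.2.1)) ^ 2) ∂M.stepKernel k o
      ≤ ∫⁻ v, ENNReal.ofReal ((ψ v.1 v.2.1 * v.2.2) ^ 2) ∂M.stepKernel k o := by
  have hψ' : Measurable fun v : X × A × ℝ => ψ v.1 v.2.1 :=
    hψ.comp (measurable_fst.prodMk measurable_snd.fst)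
  have hμ : Measurable fun v : X × A × ℝ => M.mu v.1 v.2.1 :=
    M.measurable_mu.comp (measurable_fst.prodMk measurable_snd.fst)
  rw [M.lintegral_stepKernel k o
      (fun v => ENNReal.ofReal ((ψ v.1 v.2.1 * (v.2.2 - M.mu v.1 v.2.1)) ^ 2))
      ((hψ'.mul (measurable_snd.snd.sub hμ)).pow_const 2).ennreal_ofReal,
    M.lintegral_stepKernel k o (fun v => ENNReal.ofReal ((ψ v.1 v.2.1 * v.2.2) ^ 2))
      ((hψ'.mul measurable_snd.snd).pow_const 2).ennreal_ofReal]
  refine lintegral_mono fun x =>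
    mul_le_mul_right (lintegral_mono fun a => mul_le_mul_right ?_ _) _
  simp only [mul_pow, ENNReal.ofReal_mul (sq_nonneg _),
    mul_left_comm (ENNReal.ofReal (M.gam x a _)), lintegral_const_mul' _ _ ENNReal.ofReal_ne_top]
  exact mul_le_mul_right (M.lintegral_gam_sq_sub_mu_le x a) _

end StepKernel

section Trajectory

instance : SFinite M.P := by unfold P; infer_instance

lemma P_eq : M.P = (Measure.pi fun _ => M.nu).withDensity (M.trajDensity Finset.univ) := by
  rw [P]
  congr 1
  ext o
  exact ENNReal.ofReal_prod_of_nonneg fun i _ => M.stepDensity_nonneg i o (o i)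

lemma stepDensity_dependsOn (k : Fin n) (v : X × A × ℝ) : DependsOn (fun o => M.stepDensity k o v) (Set.Iio k) :=
  fun o o' h => by simp only [stepDensity, M.pi_dependsOn k v.1 v.2.1 h]

lemma stepKernel_dependsOn (k : Fin n) : DependsOn (M.stepKernel k) (Set.Iio k) := fun o o' h => by
  simp only [stepKernel_apply, M.stepDensity_dependsOn k _ h]

lemma trajDensity_insert_update {k : Fin n} {s : Finset (Fin n)} (hs : ∀ j ∈ s, j < k) (o : Ω)
    (v : X × A × ℝ) :
    M.trajDensity (insert k s) (update o k v) = M.trajDensity s o * ENNReal.ofReal (M.stepDensity k o v) := by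
  have hk : k ∉ s := fun h => lt_irrefl k (hs k h)
  have hden : M.stepDensity k (update o k v) v = M.stepDensity k o v :=
    (M.stepDensity_dependsOn k v).apply_update_of_notMem Set.self_notMem_Iio o v
  rw [trajDensity, Finset.prod_insert hk, update_self, hden, mul_comm]
  congr 1
  refine Finset.prod_congr rfl fun j hj => ?_
  have hj' : M.stepDensity j (update o k v) (o j) = M.stepDensity j o (o j) :=
    (M.stepDensity_dependsOn j (o j)).apply_update_of_notMem (fun h => lt_asymm h (hs j hj)) o v
  rw [update_of_ne (hs j hj).ne, hj']

lemma lintegral_update_mul_trajDensity {k : Fin n} {s : Finset (Fin n)} (hs : ∀ j ∈ s, j < k)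
    {F : Ω → ℝ≥0∞} (hF : Measurable F) (o : Ω) :
    ∫⁻ v, M.trajDensity (insert k s) (update o k v) * F (update o k v) ∂M.nu
      = M.trajDensity s o * ∫⁻ v, F (update o k v) ∂M.stepKernel k o := by
  have hFk : Measurable fun v => F (update o k v) := hF.comp (measurable_update o)
  rw [stepKernel_apply, lintegral_withDensity_eq_lintegral_mul _
    (M.measurable_stepDensity_apply k o).ennreal_ofReal hFk, ← lintegral_const_mul _
    ((M.measurable_stepDensity_apply k o).ennreal_ofReal.mul hFk)]
  refine lintegral_congr fun v => ?_
  rw [M.trajDensity_insert_update hs, Pi.mul_apply]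
  ring

/-- Integrating out an upper set `t` of coordinates removes their factors from the trajDensity: the
factor of the first coordinate of `t` integrates to one given the earlier ones, which in turn do
not read it. -/
lemma lmarginal_trajDensity_mul {t : Finset (Fin n)} (ht : IsUpperSet (t : Set (Fin n)))
    {F : Ω → ℝ≥0∞} (hF : Measurable F) (hdep : DependsOn F (↑t)ᶜ) :
    ∫⋯∫⁻_t, M.trajDensity Finset.univ * F ∂(fun _ => M.nu) = M.trajDensity tᶜ * F := by
  induction t using Finset.induction_on_min generalizing F with
  | empty => simp
  | insert a s ha ih =>
    have has : a ∉ s := fun h => lt_irrefl a (ha a h)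
    have hs : IsUpperSet (s : Set (Fin n)) := fun x y hxy hx => by
      rcases Finset.mem_insert.1 (ht hxy (Finset.mem_insert_of_mem hx)) with rfl | hy
      · exact absurd (ha x hx) (not_lt.2 hxy)
      · exact hy
    have hlt : ∀ j ∈ (insert a s)ᶜ, j < a := fun j hj =>
      lt_of_not_ge fun h => Finset.mem_compl.1 hj (ht h (Finset.mem_insert_self a s))
    have hcompl : sᶜ = insert a (insert a s)ᶜ := by
      rw [Finset.compl_insert, Finset.insert_erase (Finset.mem_compl.2 has)]
    ext o
    have hFa : ∀ v, F (update o a v) = F o := fun v =>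
      hdep.apply_update_of_notMem (by simp) o v
    rw [lmarginal_insert _ ((M.measurable_trajDensity _).mul hF) has,
      ih hs hF (hdep.mono (Set.compl_subset_compl.2 (by simp [Set.subset_insert]))), hcompl]
    simp only [Pi.mul_apply]
    rw [M.lintegral_update_mul_trajDensity hlt hF]
    simp only [hFa, lintegral_const, measure_univ, mul_one]

lemma isProbabilityMeasure_P [Nonempty Ω] : IsProbabilityMeasure M.P := by
  obtain ⟨o⟩ := ‹Nonempty Ω›
  have h := congrFun (M.lmarginal_trajDensity_mul (t := Finset.univ) (F := 1)
    (by simp [isUpperSet_univ]) measurable_one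
    ((dependsOn_const (1 : ℝ≥0∞)).mono (Set.empty_subset _))) o
  simp only [mul_one, Finset.compl_univ] at h
  constructor
  rw [P_eq, withDensity_apply _ MeasurableSet.univ, Measure.restrict_univ,
    lintegral_eq_lmarginal_univ o, h]
  simp [trajDensity]

/-- Both sides reduce to the same marginal over the coordinates `≥ k`, by
`lmarginal_trajDensity_mul`. -/
lemma lintegral_P_eq_lintegral_stepKernel (k : Fin n) {F : Ω → ℝ≥0∞} (hF : Measurable F)
    (hdep : DependsOn F (Set.Iic k)) :
    ∫⁻ o, F o ∂M.P = ∫⁻ o, ∫⁻ v, F (update o k v) ∂M.stepKernel k o ∂M.P := by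
  set G : Ω → ℝ≥0∞ := fun o => ∫⁻ v, F (update o k v) ∂M.stepKernel k o
  have hG : Measurable G := (hF.comp measurable_update').lintegral_kernel_prod_right'
  have hGdep : DependsOn G (Set.Iio k) := fun o o' h => by
    simp only [G, M.stepKernel_dependsOn k h]
    congr 1
    ext v
    refine hdep fun j hj => ?_
    rcases eq_or_ne j k with rfl | hjk
    · simp
    · simp only [update_of_ne hjk]
      exact h j (lt_of_le_of_ne hj hjk)
  have hIoi : ((Finset.Ioi k : Finset (Fin n)) : Set (Fin n))ᶜ = Set.Iic k := by ext; simp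
  have hIci : ((Finset.Ici k : Finset (Fin n)) : Set (Fin n))ᶜ = Set.Iio k := by ext; simp
  have hIoi' : (Finset.Ioi k)ᶜ = insert k (Finset.Iio k) := by
    ext; simp [le_iff_lt_or_eq, or_comm]
  have hIci' : (Finset.Ici k)ᶜ = Finset.Iio k := by ext; simp
  have hF' : ∫⋯∫⁻_Finset.Ici k, M.trajDensity Finset.univ * F ∂(fun _ => M.nu)
      = M.trajDensity (Finset.Iio k) * G := by
    ext o
    rw [← Finset.Ioi_insert, lmarginal_insert _ ((M.measurable_trajDensity _).mul hF)
      Finset.notMem_Ioi_self, M.lmarginal_trajDensity_mul (by simpa using isUpperSet_Ioi k) hF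
      (by rwa [hIoi]), hIoi']
    exact M.lintegral_update_mul_trajDensity (fun j hj => Finset.mem_Iio.1 hj) hF o
  have hG' : ∫⋯∫⁻_Finset.Ici k, M.trajDensity Finset.univ * G ∂(fun _ => M.nu)
      = M.trajDensity (Finset.Iio k) * G := by
    rw [M.lmarginal_trajDensity_mul (by simpa using isUpperSet_Ici k) hG (by rwa [hIci]), hIci']
  rw [P_eq, lintegral_withDensity_eq_lintegral_mul _ (M.measurable_trajDensity _) hF,
    lintegral_withDensity_eq_lintegral_mul _ (M.measurable_trajDensity _) hG]
  exact lintegral_eq_of_lmarginal_eq (Finset.Ici k) ((M.measurable_trajDensity _).mul hF)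
    ((M.measurable_trajDensity _).mul hG) (hF'.trans hG'.symm)

lemma identDistrib_update {β : Type*} [MeasurableSpace β] (k : Fin n) {F : Ω → β}
    (hF : Measurable F) (hdep : DependsOn F (Set.Iic k)) :
    IdentDistrib F (fun p : Ω × (X × A × ℝ) => F (update p.1 k p.2)) M.P
      (M.P ⊗ₘ M.stepKernel k) where
  aemeasurable_fst := hF.aemeasurable
  aemeasurable_snd := (hF.comp measurable_update').aemeasurable
  map_eq := by
    ext s hs
    have hFk : Measurable fun p : Ω × (X × A × ℝ) => F (update p.1 k p.2) :=
      hF.comp measurable_update'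
    rw [Measure.map_apply hF hs, Measure.map_apply hFk hs, ← lintegral_indicator_one (hF hs),
      ← lintegral_indicator_one (hFk hs),
      Measure.lintegral_compProd (measurable_one.indicator (hFk hs))]
    exact M.lintegral_P_eq_lintegral_stepKernel k (F := (F ⁻¹' s).indicator 1)
      (measurable_one.indicator (hF hs))
      fun o o' h => by
        classical simp only [Set.indicator_apply, Set.mem_preimage, hdep h, Pi.one_apply]

lemma integral_P_eq_integral_stepKernel (k : Fin n) {F : Ω → ℝ} (hF : Measurable F)
    (hdep : DependsOn F (Set.Iic k)) (hint : Integrable F M.P) :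
    ∫ o, F o ∂M.P = ∫ o, ∫ v, F (update o k v) ∂M.stepKernel k o ∂M.P := by
  have h := M.identDistrib_update k hF hdep
  rw [h.integral_eq, Measure.integral_compProd (h.integrable_iff.1 hint)]

lemma ae_integrable_stepKernel (k : Fin n) {F : Ω → ℝ} (hF : Measurable F)
    (hdep : DependsOn F (Set.Iic k)) (hint : Integrable F M.P) :
    ∀ᵐ o ∂M.P, Integrable (fun v => F (update o k v)) (M.stepKernel k o) :=
  ((Measure.integrable_compProd_iff (hF.comp measurable_update').aestronglyMeasurable).1
    ((M.identDistrib_update k hF hdep).integrable_iff.1 hint)).1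

lemma identDistrib_context [Nonempty Ω] (i : Fin n) :
    IdentDistrib (fun o => (o i).1) id M.P M.Xi := by
  have := M.isProbabilityMeasure_P
  have hf : Measurable fun p : Ω × (X × A × ℝ) => (update p.1 i p.2 i).1 := by
    simpa using measurable_snd.fst
  refine (M.identDistrib_update i (measurable_context i)
    fun o o' h => by rw [h i Set.self_mem_Iic]).trans ⟨hf.aemeasurable, aemeasurable_id, ?_⟩
  ext s hs
  have hK : ∀ o, M.stepKernel i o (Prod.mk o ⁻¹' ((fun p : Ω × (X × A × ℝ) =>
      (update p.1 i p.2 i).1) ⁻¹' s)) = M.Xi s := fun o => by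
    rw [← M.map_fst_stepKernel i o, Measure.map_apply measurable_fst hs]
    simp [Set.preimage]
  rw [Measure.map_id, Measure.map_apply hf hs, Measure.compProd_apply (hf hs)]
  simp only [hK, lintegral_const, measure_univ, mul_one]

end Trajectory

def residualTerm (i : Fin n) (o : Ω) : ℝ :=
  M.g (o i).1 (o i).2.1 * ((o i).2.2 - M.mu (o i).1 (o i).2.1) / M.pi i (o i).1 o (o i).2.1

def contextTerm (i : Fin n) (o : Ω) : ℝ := M.fbar (o i).1

def estimatorTerm (i : Fin n) : Ω → ℝ := M.residualTerm i + M.contextTerm i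

def estimator (o : Ω) : ℝ := 1 / (n : ℝ) * ∑ i, M.estimatorTerm i o

def weightedVar (i : Fin n) (o : Ω) : ℝ :=
  M.g (o i).1 (o i).2.1 ^ 2 * M.sig2 (o i).1 (o i).2.1 / M.pi i (o i).1 o (o i).2.1 ^ 2

def ipw (i : Fin n) (o : Ω) : ℝ :=
  M.g (o i).1 (o i).2.1 * (o i).2.2 / M.pi i (o i).1 o (o i).2.1

section Terms

variable (i : Fin n)

lemma measurable_residualTerm : Measurable (M.residualTerm i) :=
  ((M.measurable_g.comp (measurable_obs i)).mul ((measurable_outcome i).sub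
    (M.measurable_mu.comp (measurable_obs i)))).div (M.measurable_pi_obs i)

lemma measurable_contextTerm : Measurable (M.contextTerm i) :=
  M.measurable_fbar.comp (measurable_context i)

lemma measurable_estimatorTerm : Measurable (M.estimatorTerm i) :=
  (M.measurable_residualTerm i).add (M.measurable_contextTerm i)

lemma measurable_weightedVar : Measurable (M.weightedVar i) :=
  (((M.measurable_g.comp (measurable_obs i)).pow_const 2).mul
    (M.measurable_sig2.comp (measurable_obs i))).div ((M.measurable_pi_obs i).pow_const 2)

lemma measurable_ipw : Measurable (M.ipw i) :=
  ((M.measurable_g.comp (measurable_obs i)).mul (measurable_outcome i)).div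
    (M.measurable_pi_obs i)

lemma pi_update (x : X) (o : Ω) (v : X × A × ℝ) (a : A) :
    M.pi i x (update o i v) a = M.pi i x o a :=
  (M.pi_dependsOn i x a).apply_update_of_notMem Set.self_notMem_Iio o v

lemma residualTerm_update (o : Ω) (v : X × A × ℝ) :
    M.residualTerm i (update o i v)
      = M.g v.1 v.2.1 / M.pi i v.1 o v.2.1 * (v.2.2 - M.mu v.1 v.2.1) := by
  rw [residualTerm, update_self, pi_update, div_mul_eq_mul_div]

lemma contextTerm_update (o : Ω) (v : X × A × ℝ) :
    M.contextTerm i (update o i v) = M.fbar v.1 := by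
  rw [contextTerm, update_self]

lemma weightedVar_update (o : Ω) (v : X × A × ℝ) :
    M.weightedVar i (update o i v)
      = (M.g v.1 v.2.1 / M.pi i v.1 o v.2.1) ^ 2 * M.sig2 v.1 v.2.1 := by
  rw [weightedVar, update_self, pi_update, div_pow, div_mul_eq_mul_div]

lemma ipw_update (o : Ω) (v : X × A × ℝ) :
    M.ipw i (update o i v) = M.g v.1 v.2.1 / M.pi i v.1 o v.2.1 * v.2.2 := by
  rw [ipw, update_self, pi_update, div_mul_eq_mul_div]

variable {i} in
lemma pi_congr {o o' : Ω} (h : ∀ j ∈ Set.Iic i, o j = o' j) (x : X) (a : A) :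
    M.pi i x o a = M.pi i x o' a :=
  M.pi_dependsOn i x a fun j hj => h j (Set.Iio_subset_Iic_self hj)

lemma residualTerm_dependsOn : DependsOn (M.residualTerm i) (Set.Iic i) := fun o o' h => by
  simp only [residualTerm, h i Set.self_mem_Iic, M.pi_congr h]

lemma contextTerm_dependsOn : DependsOn (M.contextTerm i) (Set.Iic i) := fun o o' h => by
  simp only [contextTerm, h i Set.self_mem_Iic]

lemma estimatorTerm_dependsOn : DependsOn (M.estimatorTerm i) (Set.Iic i) := fun o o' h => by
  simp only [estimatorTerm, Pi.add_apply, M.residualTerm_dependsOn i h,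
    M.contextTerm_dependsOn i h]

lemma weightedVar_dependsOn : DependsOn (M.weightedVar i) (Set.Iic i) := fun o o' h => by
  simp only [weightedVar, h i Set.self_mem_Iic, M.pi_congr h]

lemma ipw_dependsOn : DependsOn (M.ipw i) (Set.Iic i) := fun o o' h => by
  simp only [ipw, h i Set.self_mem_Iic, M.pi_congr h]

end Terms

section Moments

lemma integral_eq_zero_of_residual (k : Fin n) {F : Ω → ℝ} (hF : Measurable F)
    (hdep : DependsOn F (Set.Iic k)) (hint : Integrable F M.P) (ψ : Ω → X → A → ℝ)
    (hψ : ∀ o v, F (update o k v) = ψ o v.1 v.2.1 * (v.2.2 - M.mu v.1 v.2.1)) :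
    ∫ o, F o ∂M.P = 0 := by
  rw [M.integral_P_eq_integral_stepKernel k hF hdep hint]
  simp only [hψ, integral_stepKernel_residual, integral_zero]

lemma integral_residualTerm (i : Fin n) (hD : Integrable (M.residualTerm i) M.P) :
    ∫ o, M.residualTerm i o ∂M.P = 0 :=
  M.integral_eq_zero_of_residual i (M.measurable_residualTerm i) (M.residualTerm_dependsOn i) hD
    (fun o x a => M.g x a / M.pi i x o a) (M.residualTerm_update i)

lemma integral_mul_comp_context (j : Fin n) {G : Ω → ℝ} (hG : Measurable G)
    (hGdep : DependsOn G (Set.Iio j)) {φ : X → ℝ} (hφ : Measurable φ)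
    (hint : Integrable (fun o => G o * φ (o j).1) M.P) :
    ∫ o, G o * φ (o j).1 ∂M.P = (∫ o, G o ∂M.P) * ∫ x, φ x ∂M.Xi := by
  have hdep : DependsOn (fun o => G o * φ (o j).1) (Set.Iic j) := fun o o' h => by
    dsimp only
    rw [hGdep.mono Set.Iio_subset_Iic_self h, h j Set.self_mem_Iic]
  rw [M.integral_P_eq_integral_stepKernel j (F := fun o => G o * φ (o j).1)
      (hG.mul (hφ.comp (measurable_context j))) hdep hint,
    ← integral_mul_const]
  refine integral_congr_ae (ae_of_all _ fun o => ?_)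
  simp only [update_self, hGdep.apply_update_of_notMem Set.self_notMem_Iio]
  rw [integral_const_mul, M.integral_stepKernel_comp_fst j o hφ]

lemma integral_residualTerm_sq (i : Fin n) (h₁ : Integrable (fun o => M.residualTerm i o ^ 2) M.P)
    (h₂ : Integrable (M.weightedVar i) M.P) :
    ∫ o, M.residualTerm i o ^ 2 ∂M.P = ∫ o, M.weightedVar i o ∂M.P := by
  have hdep := (M.residualTerm_dependsOn i).fun_comp (· ^ 2)
  have hmeas := (M.measurable_residualTerm i).pow_const 2
  rw [M.integral_P_eq_integral_stepKernel i hmeas hdep h₁,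
    M.integral_P_eq_integral_stepKernel i (M.measurable_weightedVar i)
      (M.weightedVar_dependsOn i) h₂]
  refine integral_congr_ae (((M.ae_integrable_stepKernel i hmeas hdep h₁).and
    (M.ae_integrable_stepKernel i (M.measurable_weightedVar i) (M.weightedVar_dependsOn i) h₂)).mono
    fun o ho => ?_)
  simp only [residualTerm_update, weightedVar_update] at ho ⊢
  exact M.integral_stepKernel_sq_residual i o (fun x a => M.g x a / M.pi i x o a) ho.1 ho.2

lemma memLp_residualTerm (i : Fin n) (hipw : Integrable (fun o => M.ipw i o ^ 2) M.P) :
    MemLp (M.residualTerm i) 2 M.P := by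
  have hmeas := M.measurable_residualTerm i
  have hsq := ae_of_all M.P fun o => sq_nonneg (M.residualTerm i o)
  refine (memLp_two_iff_integrable_sq hmeas.aestronglyMeasurable).2
    ⟨(hmeas.pow_const 2).aestronglyMeasurable, (hasFiniteIntegral_iff_ofReal hsq).2 ?_⟩
  refine lt_of_le_of_lt ?_ ((hasFiniteIntegral_iff_ofReal
    (ae_of_all M.P fun o => sq_nonneg (M.ipw i o))).1 hipw.2)
  rw [M.lintegral_P_eq_lintegral_stepKernel i (hmeas.pow_const 2).ennreal_ofReal
      ((M.residualTerm_dependsOn i).fun_comp fun y => ENNReal.ofReal (y ^ 2)),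
    M.lintegral_P_eq_lintegral_stepKernel i ((M.measurable_ipw i).pow_const 2).ennreal_ofReal
      ((M.ipw_dependsOn i).fun_comp fun y => ENNReal.ofReal (y ^ 2))]
  refine lintegral_mono fun o => ?_
  simp only [residualTerm_update, ipw_update]
  exact M.lintegral_stepKernel_sq_residual_le i o (ψ := fun x a => M.g x a / M.pi i x o a)
    (M.measurable_g.div ((M.measurable_pi i).comp
      (measurable_fst.prodMk (measurable_const.prodMk measurable_snd))))

end Moments

section Covariance

lemma memLp_contextTerm [Nonempty Ω] (hfbar : MemLp M.fbar 2 M.Xi) (i : Fin n) :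
    MemLp (M.contextTerm i) 2 M.P :=
  ((M.identDistrib_context i).comp M.measurable_fbar).memLp_iff.2 hfbar

lemma integral_estimatorTerm [Nonempty Ω] (i : Fin n) (hD : Integrable (M.residualTerm i) M.P)
    (hf : Integrable (M.contextTerm i) M.P) :
    ∫ o, M.estimatorTerm i o ∂M.P = ∫ x, M.fbar x ∂M.Xi := by
  rw [estimatorTerm, integral_add' hD hf, M.integral_residualTerm i hD, zero_add]
  exact ((M.identDistrib_context i).comp M.measurable_fbar).integral_eq

lemma variance_estimatorTerm [Nonempty Ω] (i : Fin n) (hD : MemLp (M.residualTerm i) 2 M.P)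
    (hfbar : MemLp M.fbar 2 M.Xi) (hwv : Integrable (M.weightedVar i) M.P) :
    Var[M.estimatorTerm i; M.P] = ∫ o, M.weightedVar i o ∂M.P + Var[M.fbar; M.Xi] := by
  have := M.isProbabilityMeasure_P
  have hf := M.memLp_contextTerm hfbar i
  have hD0 := M.integral_residualTerm i (hD.integrable one_le_two)
  have hcov : cov[M.residualTerm i, M.contextTerm i; M.P] = 0 := by
    rw [covariance_eq_sub hD hf, hD0, zero_mul, sub_zero]
    refine M.integral_eq_zero_of_residual i
      ((M.measurable_residualTerm i).mul (M.measurable_contextTerm i))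
      (fun o o' h => by simp only [Pi.mul_apply, M.residualTerm_dependsOn i h,
        M.contextTerm_dependsOn i h]) (hD.integrable_mul hf)
      (fun o x a => M.g x a / M.pi i x o a * M.fbar x) fun o v => ?_
    rw [Pi.mul_apply, residualTerm_update, contextTerm_update]
    ring
  have hvar : Var[M.contextTerm i; M.P] = Var[M.fbar; M.Xi] :=
    ((M.identDistrib_context i).comp M.measurable_fbar).variance_eq
  rw [estimatorTerm, variance_add hD hf, hcov, mul_zero, add_zero, hvar,
    variance_of_integral_eq_zero hD.aemeasurable hD0,
    M.integral_residualTerm_sq i hD.integrable_sq hwv]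

lemma covariance_estimatorTerm_of_lt [Nonempty Ω] {i j : Fin n} (hij : i < j)
    (hD : ∀ k, MemLp (M.residualTerm k) 2 M.P) (hfbar : MemLp M.fbar 2 M.Xi) :
    cov[M.estimatorTerm i, M.estimatorTerm j; M.P] = 0 := by
  have := M.isProbabilityMeasure_P
  have hf := M.memLp_contextTerm hfbar
  have ht : ∀ k, MemLp (M.estimatorTerm k) 2 M.P := fun k => (hD k).add (hf k)
  have hti : DependsOn (M.estimatorTerm i) (Set.Iio j) :=
    (M.estimatorTerm_dependsOn i).mono (Set.Iic_subset_Iio.2 hij)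
  have hI₁ : Integrable (fun o => M.estimatorTerm i o * M.residualTerm j o) M.P :=
    (ht i).integrable_mul (hD j)
  have hI₂ : Integrable (fun o => M.estimatorTerm i o * M.contextTerm j o) M.P :=
    (ht i).integrable_mul (hf j)
  have hresidual : ∫ o, M.estimatorTerm i o * M.residualTerm j o ∂M.P = 0 := by
    refine M.integral_eq_zero_of_residual j
      ((M.measurable_estimatorTerm i).mul (M.measurable_residualTerm j))
      (fun o o' h => by simp only [M.residualTerm_dependsOn j h,
        (hti.mono Set.Iio_subset_Iic_self) h]) hI₁
      (fun o x a => M.estimatorTerm i o * (M.g x a / M.pi j x o a)) fun o v => ?_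
    rw [residualTerm_update, hti.apply_update_of_notMem Set.self_notMem_Iio]
    ring
  have hcontext : ∫ o, M.estimatorTerm i o * M.contextTerm j o ∂M.P
      = (∫ o, M.estimatorTerm i o ∂M.P) * ∫ x, M.fbar x ∂M.Xi :=
    M.integral_mul_comp_context j (M.measurable_estimatorTerm i) hti M.measurable_fbar hI₂
  rw [covariance_eq_sub (ht i) (ht j), M.integral_estimatorTerm j ((hD j).integrable one_le_two)
    ((hf j).integrable one_le_two), sub_eq_zero]
  calc ∫ o, (M.estimatorTerm i * M.estimatorTerm j) o ∂M.P
      = ∫ o, (M.estimatorTerm i o * M.residualTerm j o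
          + M.estimatorTerm i o * M.contextTerm j o) ∂M.P := by
        simp only [Pi.mul_apply, estimatorTerm, Pi.add_apply, mul_add]
    _ = _ := by
        rw [integral_add hI₁ hI₂, hresidual, hcontext, zero_add]

end Covariance

theorem n_mul_variance_estimator (hn : 0 < n) (hfbar : MemLp M.fbar 2 M.Xi)
    (hipw : ∀ i, Integrable (fun o => M.ipw i o ^ 2) M.P)
    (hwv : ∀ i, Integrable (M.weightedVar i) M.P) :
    (n : ℝ) * Var[M.estimator; M.P]
      = Var[M.fbar; M.Xi] + 1 / (n : ℝ) * ∑ i, ∫ o, M.weightedVar i o ∂M.P := by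
  rcases isEmpty_or_nonempty Ω with hΩ | hΩ
  · -- then `A` is empty, so `fbar = 0`
    have hfbar0 : M.fbar = 0 := funext fun x => by
      have : IsEmpty A := ⟨fun a => hΩ.false fun _ => (x, a, 0)⟩
      exact integral_of_isEmpty
    simp [Measure.eq_zero_of_isEmpty M.P, hfbar0]
  have := M.isProbabilityMeasure_P
  have hD i := M.memLp_residualTerm i (hipw i)
  have hcov : ∀ i j, cov[M.estimatorTerm i, M.estimatorTerm j; M.P]
      = if i = j then ∫ o, M.weightedVar i o ∂M.P + Var[M.fbar; M.Xi] else 0 := by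
    intro i j
    rcases lt_trichotomy i j with hij | rfl | hji
    · rw [if_neg hij.ne, M.covariance_estimatorTerm_of_lt hij hD hfbar]
    · rw [if_pos rfl, covariance_self (M.measurable_estimatorTerm i).aemeasurable,
        M.variance_estimatorTerm i (hD i) hfbar (hwv i)]
    · rw [if_neg hji.ne', covariance_comm, M.covariance_estimatorTerm_of_lt hji hD hfbar]
  have hn' : (n : ℝ) ≠ 0 := Nat.cast_ne_zero.2 hn.ne'
  unfold estimator
  have ht : ∀ i, MemLp (M.estimatorTerm i) 2 M.P := fun i =>
    (hD i).add (M.memLp_contextTerm hfbar i)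
  rw [variance_const_mul, variance_fun_sum ht]
  simp only [hcov, Finset.sum_ite_eq, Finset.mem_univ, if_true, Finset.sum_add_distrib,
    Finset.sum_const, Finset.card_univ, Fintype.card_fin, nsmul_eq_mul]
  field_simp
  ring

end AdaptiveDesign

theorem oracle_estimator_variance_general
    {X A : Type*} [MeasurableSpace X] [MeasurableSpace A]
    (lamX : Measure X) (lamA : Measure A) (lamY : Measure ℝ)
    [SigmaFinite lamX] [SigmaFinite lamA] [SigmaFinite lamY]
    (n : ℕ) (hn : 0 < n)
    -- context trajDensity
    (xi : X → ℝ) (hxi_meas : Measurable xi) (hxi_nonneg : ∀ x, 0 ≤ xi x)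
    (hxi_norm : ∫ x, xi x ∂lamX = 1)
    -- behavioral policy densities (history-dependent)
    (pi : Fin n → X → (Fin n → X × A × ℝ) → A → ℝ)
    (hpi_meas : ∀ i, Measurable fun p : X × (Fin n → X × A × ℝ) × A => pi i p.1 p.2.1 p.2.2)
    (hpi_pos : ∀ i x o a, 0 < pi i x o a)
    (hpi_hist : ∀ (i : Fin n) x o o' a, (∀ j : Fin n, (j : ℕ) < (i : ℕ) → o j = o' j) →
      pi i x o a = pi i x o' a)
    (hpi_norm : ∀ i x o, ∫ a, pi i x o a ∂lamA = 1)
    -- outcome kernel trajDensity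
    (gam : X → A → ℝ → ℝ)
    (hgam_meas : Measurable fun p : (X × A) × ℝ => gam p.1.1 p.1.2 p.2)
    (hgam_nonneg : ∀ x a y, 0 ≤ gam x a y)
    (hgam_norm : ∀ x a, ∫ y, gam x a y ∂lamY = 1)
    -- evaluation function
    (g : X → A → ℝ) (hg_meas : Measurable fun p : X × A => g p.1 p.2)
    -- trajectory law of O_n
    (P : Measure (Fin n → X × A × ℝ))
    (hP : P = (Measure.pi fun _ : Fin n => lamX.prod (lamA.prod lamY)).withDensity
      fun o => ENNReal.ofReal (∏ i : Fin n,
        xi (o i).1 * pi i (o i).1 o (o i).2.1 * gam (o i).1 (o i).2.1 (o i).2.2))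
    -- context distribution
    (Xi : Measure X) (hXi : Xi = lamX.withDensity fun x => ENNReal.ofReal (xi x))
    -- treatment effect
    (mustar : X → A → ℝ) (hmu : ∀ x a, mustar x a = ∫ y, y * gam x a y ∂lamY)
    -- conditional variance function
    (sig2 : X → A → ℝ)
    (hsig2 : ∀ x a, sig2 x a = ∫ y, (y - mustar x a) ^ 2 * gam x a y ∂lamY)
    -- the oracle estimator
    (T : (Fin n → X × A × ℝ) → ℝ)
    (hT : T = fun o => (1 / (n : ℝ)) * ∑ i : Fin n,
      (g (o i).1 (o i).2.1 * ((o i).2.2 - mustar (o i).1 (o i).2.1)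
          / pi i (o i).1 o (o i).2.1
        + ∫ a, g (o i).1 a * mustar (o i).1 a ∂lamA))
    -- the weighted norm ‖σ‖_(n)²
    (S2 : ℝ) (hS2 : S2 = (1 / (n : ℝ)) * ∑ i : Fin n,
      ∫ o, (g (o i).1 (o i).2.1) ^ 2 * sig2 (o i).1 (o i).2.1
        / (pi i (o i).1 o (o i).2.1) ^ 2 ∂P)
    -- finiteness of all expectations appearing in the statement
    (hgmu_L2 : MemLp (fun x => ∫ a, g x a * mustar x a ∂lamA) 2 Xi)
    (hipw_L2 : ∀ i, Integrable
      (fun o => (g (o i).1 (o i).2.1 * (o i).2.2 / pi i (o i).1 o (o i).2.1) ^ 2) P)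
    (hS2_int : ∀ i, Integrable (fun o => (g (o i).1 (o i).2.1) ^ 2 * sig2 (o i).1 (o i).2.1
      / (pi i (o i).1 o (o i).2.1) ^ 2) P) :
    (n : ℝ) * variance T P
      = variance (fun x => ∫ a, g x a * mustar x a ∂lamA) Xi + S2 := by
  obtain rfl := funext₂ hmu
  obtain rfl := funext₂ hsig2
  subst hP hXi hT hS2
  let M : AdaptiveDesign X A n :=
    { lamX, lamA, lamY, xi, pi, gam, g
      measurable_xi := hxi_meas, xi_nonneg := hxi_nonneg, integral_xi := hxi_norm
      measurable_pi := hpi_meas, pi_nonneg := fun i x o a => (hpi_pos i x o a).le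
      pi_dependsOn := fun i x a o o' h => hpi_hist i x o o' a h, integral_pi := hpi_norm
      measurable_gam := hgam_meas, gam_nonneg := hgam_nonneg, integral_gam := hgam_norm
      measurable_g := hg_meas }
  exact M.n_mul_variance_estimator hn hgmu_L2 hipw_L2 hS2_int

/-- the oracle estimator attains the optimal variance v*². -/
theorem oracle_estimator_variance
    {X A : Type*} [MeasurableSpace X] [MeasurableSpace A]
    (lamX : Measure X) (lamA : Measure A) (lamY : Measure ℝ)
    [SigmaFinite lamX] [SigmaFinite lamA] [SigmaFinite lamY]
    (n : ℕ) (hn : 0 < n)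
    -- context density
    (xi : X → ℝ) (hxi_meas : Measurable xi) (hxi_nonneg : ∀ x, 0 ≤ xi x)
    (hxi_norm : ∫ x, xi x ∂lamX = 1)
    -- behavioral policy densities (history-dependent)
    (pi : Fin n → X → (Fin n → X × A × ℝ) → A → ℝ)
    (hpi_meas : ∀ i, Measurable fun p : X × (Fin n → X × A × ℝ) × A => pi i p.1 p.2.1 p.2.2)
    (hpi_pos : ∀ i x o a, 0 < pi i x o a)
    (hpi_hist : ∀ (i : Fin n) x o o' a, (∀ j : Fin n, (j : ℕ) < (i : ℕ) → o j = o' j) →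
      pi i x o a = pi i x o' a)
    (hpi_norm : ∀ i x o, ∫ a, pi i x o a ∂lamA = 1)
    -- outcome kernel density
    (gam : X → A → ℝ → ℝ)
    (hgam_meas : Measurable fun p : (X × A) × ℝ => gam p.1.1 p.1.2 p.2)
    (hgam_nonneg : ∀ x a y, 0 ≤ gam x a y)
    (hgam_norm : ∀ x a, ∫ y, gam x a y ∂lamY = 1)
    -- evaluation function
    (g : X → A → ℝ) (hg_meas : Measurable fun p : X × A => g p.1 p.2)
    -- trajectory law of O_n
    (P : Measure (Fin n → X × A × ℝ))
    (hP : P = (Measure.pi fun _ : Fin n => lamX.prod (lamA.prod lamY)).withDensity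
      fun o => ENNReal.ofReal (∏ i : Fin n,
        xi (o i).1 * pi i (o i).1 o (o i).2.1 * gam (o i).1 (o i).2.1 (o i).2.2))
    -- context distribution
    (Xi : Measure X) (hXi : Xi = lamX.withDensity fun x => ENNReal.ofReal (xi x))
    -- treatment effect
    (mustar : X → A → ℝ) (hmu : ∀ x a, mustar x a = ∫ y, y * gam x a y ∂lamY)
    -- conditional variance function
    (sig2 : X → A → ℝ)
    (hsig2 : ∀ x a, sig2 x a = ∫ y, (y - mustar x a) ^ 2 * gam x a y ∂lamY)
    -- off-policy value
    (tau : ℝ) (htau : tau = ∫ x, ∫ a, g x a * mustar x a ∂lamA ∂Xi)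
    (htau_int : Integrable (fun x => ∫ a, g x a * mustar x a ∂lamA) Xi)
    -- the oracle estimator
    (T : (Fin n → X × A × ℝ) → ℝ)
    (hT : T = fun o => (1 / (n : ℝ)) * ∑ i : Fin n,
      (g (o i).1 (o i).2.1 * ((o i).2.2 - mustar (o i).1 (o i).2.1)
          / pi i (o i).1 o (o i).2.1
        + ∫ a, g (o i).1 a * mustar (o i).1 a ∂lamA))
    -- the weighted norm ‖σ‖_(n)²
    (S2 : ℝ) (hS2 : S2 = (1 / (n : ℝ)) * ∑ i : Fin n,
      ∫ o, (g (o i).1 (o i).2.1) ^ 2 * sig2 (o i).1 (o i).2.1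
        / (pi i (o i).1 o (o i).2.1) ^ 2 ∂P)
    -- finiteness of all expectations appearing in the statement
    (hT_L2 : MemLp T 2 P)
    (hgmu_L2 : MemLp (fun x => ∫ a, g x a * mustar x a ∂lamA) 2 Xi)
    (hipw_L2 : ∀ i, Integrable
      (fun o => (g (o i).1 (o i).2.1 * (o i).2.2 / pi i (o i).1 o (o i).2.1) ^ 2) P)
    (hS2_int : ∀ i, Integrable (fun o => (g (o i).1 (o i).2.1) ^ 2 * sig2 (o i).1 (o i).2.1
      / (pi i (o i).1 o (o i).2.1) ^ 2) P) :
    (n : ℝ) * variance T P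
      = variance (fun x => ∫ a, g x a * mustar x a ∂lamA) Xi + S2 :=
  oracle_estimator_variance_general lamX lamA lamY n hn xi hxi_meas hxi_nonneg hxi_norm pi hpi_meas
    hpi_pos hpi_hist hpi_norm gam hgam_meas hgam_nonneg hgam_norm g hg_meas P hP Xi hXi mustar hmu
    sig2 hsig2 T hT S2 hS2 hgmu_L2 hipw_L2 hS2_int
end
end

section
/- Let (μ, ν) be probability measures on a common measurable space (Ω, 𝓕), and let A, B ∈ 𝓕 be events with min{μ(A), ν(B)} ≥ 1 − ε for some ε ∈ [0, 1/4]. Then the conditional distributions (μ|A)(E) := μ(A ∩ E)/μ(A) and (ν|B)(E) := ν(B ∩ E)/ν(B) satisfy | TV(μ|A, ν|B) − TV(μ, ν) | ≤ 2ε, where TV denotes the total variation distance TV(P,Q) := sup_{E ∈ 𝓕} |P(E) − Q(E)|. -/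
open MeasureTheory ProbabilityTheory
open scoped ENNReal ProbabilityTheory

noncomputable section

/-- The total variation distance between two probability measures, defined as the
supremum over measurable events of the absolute difference of their probabilities. -/
def tvDist {Ω : Type*} [MeasurableSpace Ω] (P Q : Measure Ω) : ℝ :=
  sSup {r : ℝ | ∃ E : Set Ω, MeasurableSet E ∧ r = |(P E).toReal - (Q E).toReal|}

lemma cond_close {Ω : Type*} [MeasurableSpace Ω]
    (P : Measure Ω) [IsProbabilityMeasure P]
    {A : Set Ω} (hA : MeasurableSet A) {ε : ℝ}
    (hε0 : 0 ≤ ε) (hε1 : ε ≤ 1/4)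
    (hPA : 1 - ε ≤ (P A).toReal) (E : Set Ω) :
    |((P[|A]) E).toReal - (P E).toReal| ≤ ε := by
  have hane : P A ≠ ∞ := measure_ne_top _ _
  have ha_pos : (0:ℝ) < (P A).toReal := by linarith
  set a := (P A).toReal with ha_def
  set c := (P (A ∩ E)).toReal with hc_def
  set e := (P E).toReal with he_def
  have ha1 : a ≤ 1 := by
    have : P A ≤ 1 := prob_le_one
    simpa [ha_def] using ENNReal.toReal_mono (by simp) this
  have hca : c ≤ a :=
    ENNReal.toReal_mono hane (measure_mono Set.inter_subset_left)
  have hce : c ≤ e :=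
    ENNReal.toReal_mono (measure_ne_top _ _) (measure_mono Set.inter_subset_right)
  have hc0 : 0 ≤ c := ENNReal.toReal_nonneg
  have hec : e ≤ c + (1 - a) := by
    have hsub : E ⊆ (A ∩ E) ∪ Aᶜ := by
      intro x hx
      by_cases hxA : x ∈ A
      · exact Or.inl ⟨hxA, hx⟩
      · exact Or.inr hxA
    have h1 : P E ≤ P (A ∩ E) + P Aᶜ :=
      le_trans (measure_mono hsub) (measure_union_le _ _)
    have hcompl : (P Aᶜ).toReal = 1 - a := by
      rw [prob_compl_eq_one_sub hA, ENNReal.toReal_sub_of_le prob_le_one (by simp)]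
      simp [ha_def]
    have := ENNReal.toReal_mono (by
      exact ENNReal.add_ne_top.2 ⟨measure_ne_top _ _, measure_ne_top _ _⟩) h1
    rw [ENNReal.toReal_add (measure_ne_top _ _) (measure_ne_top _ _), hcompl] at this
    linarith
  have hcond : ((P[|A]) E).toReal = c / a := by
    rw [cond_apply hA, ENNReal.toReal_mul, ENNReal.toReal_inv]
    rw [div_eq_inv_mul]
  rw [hcond, abs_le]
  have ha0' : a ≠ 0 := ne_of_gt ha_pos
  have hd : (c / a) * a = c := div_mul_cancel₀ c ha0'
  have hd0 : 0 ≤ c / a := div_nonneg hc0 (le_of_lt ha_pos)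
  constructor
  · nlinarith [hd, hd0, hca, hce, hec, ha_pos, ha1]
  · nlinarith [hd, hd0, hca, hce, hec, ha_pos, ha1]

/-- Lemma 1: conditioning two probability measures on high-probability
events changes their total variation distance by at most 2ε. -/
theorem tv_distance_modification
    {Ω : Type*} [MeasurableSpace Ω]
    (μ ν : Measure Ω) [IsProbabilityMeasure μ] [IsProbabilityMeasure ν]
    (A B : Set Ω) (hA : MeasurableSet A) (hB : MeasurableSet B)
    (ε : ℝ) (hε : ε ∈ Set.Icc (0 : ℝ) (1 / 4))
    (hμA : 1 - ε ≤ (μ A).toReal) (hνB : 1 - ε ≤ (ν B).toReal) :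
    |tvDist (μ[|A]) (ν[|B]) - tvDist μ ν| ≤ 2 * ε := by
  obtain ⟨hε0, hε1⟩ := hε
  set S1 := {r : ℝ | ∃ E : Set Ω, MeasurableSet E ∧
    r = |((μ[|A]) E).toReal - ((ν[|B]) E).toReal|} with hS1
  set S2 := {r : ℝ | ∃ E : Set Ω, MeasurableSet E ∧
    r = |(μ E).toReal - (ν E).toReal|} with hS2
  have hprob : ∀ (P : Measure Ω) [IsProbabilityMeasure P] (E : Set Ω),
      (P E).toReal ≤ 1 := by
    intro P _ E
    have : P E ≤ 1 := prob_le_one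
    simpa using ENNReal.toReal_mono (by simp) this
  have hclμ : ∀ E : Set Ω, |((μ[|A]) E).toReal - (μ E).toReal| ≤ ε :=
    cond_close μ hA hε0 hε1 hμA
  have hclν : ∀ E : Set Ω, |((ν[|B]) E).toReal - (ν E).toReal| ≤ ε :=
    cond_close ν hB hε0 hε1 hνB
  have hne1 : S1.Nonempty := ⟨0, ∅, MeasurableSet.empty, by simp⟩
  have hne2 : S2.Nonempty := ⟨0, ∅, MeasurableSet.empty, by simp⟩
  have hbdd2 : BddAbove S2 := by
    refine ⟨1, ?_⟩
    rintro r ⟨E, hE, rfl⟩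
    have h1 := hprob μ E
    have h2 := hprob ν E
    have h3 : (0:ℝ) ≤ (μ E).toReal := ENNReal.toReal_nonneg
    have h4 : (0:ℝ) ≤ (ν E).toReal := ENNReal.toReal_nonneg
    rw [abs_sub_le_iff]
    constructor <;> linarith
  have hbdd1 : BddAbove S1 := by
    refine ⟨1 + 2 * ε, ?_⟩
    rintro r ⟨E, hE, rfl⟩
    have h1 := hclμ E
    have h2 := hclν E
    have h3 := hprob μ E
    have h4 := hprob ν E
    have h5 : (0:ℝ) ≤ (μ E).toReal := ENNReal.toReal_nonneg
    have h6 : (0:ℝ) ≤ (ν E).toReal := ENNReal.toReal_nonneg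
    rw [abs_le] at h1 h2
    rw [abs_sub_le_iff]
    constructor <;> linarith
  have key : ∀ E : Set Ω,
      |((μ[|A]) E).toReal - ((ν[|B]) E).toReal| ≤
        |(μ E).toReal - (ν E).toReal| + 2 * ε ∧
      |(μ E).toReal - (ν E).toReal| ≤
        |((μ[|A]) E).toReal - ((ν[|B]) E).toReal| + 2 * ε := by
    intro E
    have h1 := hclμ E
    have h2 := hclν E
    have t1 : |((μ[|A]) E).toReal - ((ν[|B]) E).toReal| ≤
        |(μ E).toReal - (ν E).toReal| + 2 * ε := by
      have := abs_sub_le ((μ[|A]) E).toReal (μ E).toReal (((ν[|B]) E).toReal)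
      have := abs_sub_le (μ E).toReal (ν E).toReal (((ν[|B]) E).toReal)
      have h2' : |(ν E).toReal - ((ν[|B]) E).toReal| ≤ ε := by
        rw [abs_sub_comm]; exact h2
      linarith
    have t2 : |(μ E).toReal - (ν E).toReal| ≤
        |((μ[|A]) E).toReal - ((ν[|B]) E).toReal| + 2 * ε := by
      have := abs_sub_le (μ E).toReal ((μ[|A]) E).toReal ((ν E).toReal)
      have := abs_sub_le ((μ[|A]) E).toReal ((ν[|B]) E).toReal ((ν E).toReal)
      have h1' : |(μ E).toReal - ((μ[|A]) E).toReal| ≤ ε := by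
        rw [abs_sub_comm]; exact h1
      linarith
    exact ⟨t1, t2⟩
  have hT1 : tvDist (μ[|A]) (ν[|B]) = sSup S1 := rfl
  have hT2 : tvDist μ ν = sSup S2 := rfl
  rw [hT1, hT2, abs_sub_le_iff]
  constructor
  · have : sSup S1 ≤ sSup S2 + 2 * ε := by
      apply csSup_le hne1
      rintro r ⟨E, hE, rfl⟩
      have hmem : |(μ E).toReal - (ν E).toReal| ∈ S2 := ⟨E, hE, rfl⟩
      have hle := le_csSup hbdd2 hmem
      have hk := (key E).1
      linarith
    linarith
  · have : sSup S2 ≤ sSup S1 + 2 * ε := by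
      apply csSup_le hne2
      rintro r ⟨E, hE, rfl⟩
      have hmem : |((μ[|A]) E).toReal - ((ν[|B]) E).toReal| ∈ S1 := ⟨E, hE, rfl⟩
      have hle := le_csSup hbdd1 hmem
      have hk := (key E).2
      linarith
    linarith
end
end

section
/- Let P be a probability measure on a measurable space X, let h, h̃ : X → ℝ be measurable functions with h ∈ L²(P), |h̃(x)| ≤ |h(x)| for all x, and h̃ bounded, and let s > 0 satisfy s·‖h̃‖_∞ ≤ 1/8. Define the tilted probability measure P_s by dP_s/dP (x) := exp(s h̃(x))/Z(s), where Z(s) := E_{X~P}[exp(s h̃(X))]. Then the chi-square divergence satisfies χ²(P_s ‖ P) = Var_{X~P}[ exp(s h̃(X))/Z(s) ] ≤ exp(4 s ‖h̃‖_∞) · s² · E_{X~P}[h(X)²] ≤ 2 s² E_{X~P}[h(X)²]. -/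
/-!
Shifting the density `exp (s h̃) / Z` by the constant `1 / Z` does not change its variance, so the
variance is at most `E[((exp (s h̃) - 1) / Z)²]`. Pointwise `|exp t - 1| ≤ |t| exp |t|`, and
`Z ≥ exp (-s‖h̃‖_∞)` since `s h̃ ≥ -s‖h̃‖_∞`; together with `|h̃| ≤ |h|` this gives the bound
`exp (4 s‖h̃‖_∞) s² E[h²]`, and `exp (4 s‖h̃‖_∞) ≤ exp (1/2) ≤ 2`.
-/

open MeasureTheory ProbabilityTheory Real
open scoped ENNReal

noncomputable section

lemma abs_exp_sub_one_le_abs_mul_exp_abs (t : ℝ) : |exp t - 1| ≤ |t| * exp |t| := by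
  rcases le_or_gt 0 t with ht | ht
  · rw [abs_of_nonneg ht, abs_of_nonneg (by linarith [one_le_exp ht])]
    have h := mul_le_mul_of_nonneg_right (one_sub_le_exp_neg t) (exp_pos t).le
    rw [← exp_add, neg_add_cancel, exp_zero] at h
    linarith
  · rw [abs_of_neg ht, abs_of_neg (by simpa using ht)]
    nlinarith [add_one_le_exp t, one_le_exp (neg_nonneg.2 ht.le)]

lemma sq_exp_sub_one_div_le {t a Z : ℝ} (ht : |t| ≤ a) (hZ : exp (-a) ≤ Z) :
    ((exp t - 1) / Z) ^ 2 ≤ exp (4 * a) * t ^ 2 := by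
  have hZ_pos : 0 < Z := (exp_pos _).trans_le hZ
  have hZ_inv : Z⁻¹ ≤ exp a := by
    simpa only [exp_neg, inv_inv] using inv_anti₀ (exp_pos _) hZ
  have h_num : |exp t - 1| ≤ |t| * exp a :=
    (abs_exp_sub_one_le_abs_mul_exp_abs t).trans (by gcongr)
  calc ((exp t - 1) / Z) ^ 2 = |exp t - 1| ^ 2 * Z⁻¹ ^ 2 := by
        rw [sq_abs, div_eq_mul_inv, mul_pow]
    _ ≤ (|t| * exp a) ^ 2 * exp a ^ 2 := by gcongr
    _ = exp (4 * a) * t ^ 2 := by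
        rw [show 4 * a = ((4 : ℕ) : ℝ) * a by norm_num, exp_nat_mul, mul_pow, sq_abs]
        ring

section BoundedExponent

variable {X : Type*} [MeasurableSpace X] {P : Measure X} [IsProbabilityMeasure P]
  {u : X → ℝ} {a : ℝ}

lemma integrable_exp_of_abs_le (hu : AEMeasurable u P) (hua : ∀ x, |u x| ≤ a) :
    Integrable (fun x => exp (u x)) P :=
  .of_bound hu.exp.aestronglyMeasurable (exp a) <| ae_of_all _ fun x => by
    rw [norm_of_nonneg (exp_pos _).le]
    exact exp_le_exp.2 (abs_le.1 (hua x)).2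

lemma exp_neg_le_integral_exp (hu : AEMeasurable u P) (hua : ∀ x, |u x| ≤ a) :
    exp (-a) ≤ ∫ x, exp (u x) ∂P := by
  calc exp (-a) = ∫ _, exp (-a) ∂P := by simp
    _ ≤ ∫ x, exp (u x) ∂P :=
      integral_mono (integrable_const _) (integrable_exp_of_abs_le hu hua)
        fun x => exp_le_exp.2 (abs_le.1 (hua x)).1

lemma variance_exp_div_integral_exp_le {v : X → ℝ} (hu : AEMeasurable u P)
    (hua : ∀ x, |u x| ≤ a) (huv : ∀ x, |u x| ≤ |v x|) (hv : MemLp v 2 P) :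
    Var[fun x => exp (u x) / ∫ y, exp (u y) ∂P; P] ≤ exp (4 * a) * ∫ x, v x ^ 2 ∂P := by
  set Z := ∫ y, exp (u y) ∂P
  have hZ : exp (-a) ≤ Z := exp_neg_le_integral_exp hu hua
  have h_meas : AEStronglyMeasurable (fun x => exp (u x) / Z) P :=
    (hu.exp.div_const Z).aestronglyMeasurable
  calc Var[fun x => exp (u x) / Z; P] = Var[fun x => exp (u x) / Z - Z⁻¹; P] :=
        (variance_sub_const h_meas _).symm
    _ ≤ ∫ x, (exp (u x) / Z - Z⁻¹) ^ 2 ∂P :=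
        variance_le_expectation_sq (h_meas.sub aestronglyMeasurable_const)
    _ ≤ ∫ x, exp (4 * a) * v x ^ 2 ∂P := by
        refine integral_mono_of_nonneg (ae_of_all _ fun x => sq_nonneg _)
          (hv.integrable_sq.const_mul _) (ae_of_all _ fun x => ?_)
        dsimp only
        rw [show exp (u x) / Z - Z⁻¹ = (exp (u x) - 1) / Z by ring]
        exact (sq_exp_sub_one_div_le (hua x) hZ).trans
          (mul_le_mul_of_nonneg_left (sq_le_sq.2 (huv x)) (exp_pos _).le)
    _ = exp (4 * a) * ∫ x, v x ^ 2 ∂P := integral_const_mul _ _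

end BoundedExponent

theorem chisq_tilted_bound_general
    {X : Type*} [MeasurableSpace X] (P : Measure X) [IsProbabilityMeasure P]
    (h htil : X → ℝ)
    (hh_L2 : MemLp h 2 P)
    (htil_meas : Measurable htil)
    (hdom : ∀ x, |htil x| ≤ |h x|)
    (M : ℝ) (hM : ∀ x, |htil x| ≤ M)
    (s : ℝ) (hs : 0 < s) (hsM : s * M ≤ 1 / 8)
    (Z : ℝ) (hZ : Z = ∫ x, Real.exp (s * htil x) ∂P)
    -- the tilted probability measure P_s, with density exp(s h̃)/Z w.r.t. P
    (Ps : Measure X)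
    (hPs : Ps = P.withDensity fun x => ENNReal.ofReal (Real.exp (s * htil x) / Z)) :
    variance (fun x => (Ps.rnDeriv P x).toReal) P
        = variance (fun x => Real.exp (s * htil x) / Z) P
      ∧ variance (fun x => Real.exp (s * htil x) / Z) P
        ≤ Real.exp (4 * s * M) * s ^ 2 * ∫ x, (h x) ^ 2 ∂P
      ∧ Real.exp (4 * s * M) * s ^ 2 * (∫ x, (h x) ^ 2 ∂P)
        ≤ 2 * s ^ 2 * ∫ x, (h x) ^ 2 ∂P := by
  subst hZ hPs
  have hu : Measurable fun x => s * htil x := htil_meas.const_mul s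
  have hua : ∀ x, |s * htil x| ≤ s * M := fun x => by
    rw [abs_mul, abs_of_pos hs]; exact mul_le_mul_of_nonneg_left (hM x) hs.le
  have huv : ∀ x, |s * htil x| ≤ |s * h x| := fun x => by
    rw [abs_mul, abs_mul]; exact mul_le_mul_of_nonneg_left (hdom x) (abs_nonneg s)
  have hexp : exp (4 * s * M) ≤ 2 := by
    calc exp (4 * s * M) ≤ exp (1 / 2) := exp_le_exp.2 (by linarith)
      _ ≤ 1 / (1 - 1 / 2) := exp_bound_div_one_sub_of_interval (by norm_num) (by norm_num)
      _ = 2 := by norm_num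
  refine ⟨variance_congr ?_, ?_, ?_⟩
  · filter_upwards [Measure.rnDeriv_withDensity P (hu.exp.div_const _).ennreal_ofReal]
      with x hx
    rw [hx, ENNReal.toReal_ofReal (by positivity)]
  · have := variance_exp_div_integral_exp_le hu.aemeasurable hua huv (hh_L2.const_mul s)
    simpa only [mul_pow, integral_const_mul, ← mul_assoc] using this
  · gcongr

/-- chi-square divergence bound for an exponentially tilted measure.
Here `M` plays the role of `‖h̃‖_∞`. -/
theorem chisq_tilted_bound
    {X : Type*} [MeasurableSpace X] (P : Measure X) [IsProbabilityMeasure P]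
    (h htil : X → ℝ)
    (hh_meas : Measurable h) (hh_L2 : MemLp h 2 P)
    (htil_meas : Measurable htil)
    (hdom : ∀ x, |htil x| ≤ |h x|)
    (M : ℝ) (hM : ∀ x, |htil x| ≤ M)
    (s : ℝ) (hs : 0 < s) (hsM : s * M ≤ 1 / 8)
    (Z : ℝ) (hZ : Z = ∫ x, Real.exp (s * htil x) ∂P)
    -- the tilted probability measure P_s, with density exp(s h̃)/Z w.r.t. P
    (Ps : Measure X)
    (hPs : Ps = P.withDensity fun x => ENNReal.ofReal (Real.exp (s * htil x) / Z)) :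
    variance (fun x => (Ps.rnDeriv P x).toReal) P
        = variance (fun x => Real.exp (s * htil x) / Z) P
      ∧ variance (fun x => Real.exp (s * htil x) / Z) P
        ≤ Real.exp (4 * s * M) * s ^ 2 * ∫ x, (h x) ^ 2 ∂P
      ∧ Real.exp (4 * s * M) * s ^ 2 * (∫ x, (h x) ^ 2 ∂P)
        ≤ 2 * s ^ 2 * ∫ x, (h x) ^ 2 ∂P :=
  chisq_tilted_bound_general P h htil hh_L2 htil_meas hdom M hM s hs hsM Z hZ Ps hPs
end
end

section
/- Let P be a probability measure on a measurable space X, and let h ∈ L⁴(P) with E_{X~P}[h(X)] = 0 and E_{X~P}[h(X)²] > 0. Set H := √(E_{X~P}[h(X)⁴]) / E_{X~P}[h(X)²] and ‖h‖ := √(E_{X~P}[h(X)²]), and define h̃(x) := h(x) if |h(x)| ≤ 2H‖h‖ and h̃(x) := sign(h(x))·‖h‖ otherwise. For n ∈ ℕ with n ≥ 16 H² and s := 1/(4‖h‖√n), the following hold: E_{X~P}[ h(X) exp(s h̃(X)) ] ≥ ‖h‖/(16√n), and consequently E_{X~P}[ h(X) exp(s h̃(X)) ] / E_{X~P}[ exp(s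 h̃(X)) ] ≥ ‖h‖/(24√n). -/
/-!
On `|h| ≤ M := 2H‖h‖` the truncation is the identity and `|s h| ≤ s M ≤ 1/8`, so the
second-order bound `|eᵘ - 1 - u| ≤ u²` gives `h (e^{s h̃} - 1) ≥ (1 - s M) s h²`; off that set
`h̃` has the sign of `h`, so `h (e^{s h̃} - 1) ≥ 0`. Both cases are covered by the single
pointwise bound `(1 - s M) s (h² - h⁴ / M²)`, and since `E h = 0` and `E h⁴ = H² ‖h‖⁴` its
expectation gives `E[h e^{s h̃}] ≥ (7/8)(3/4) s ‖h‖² ≥ ‖h‖ / (16 √n)`. The ratio bound follows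
from `0 < E e^{s h̃} ≤ e^{s M} ≤ 3/2`.
-/

open MeasureTheory ProbabilityTheory Real

noncomputable section

lemma mul_exp_mul_sub_one_ge {s t c : ℝ} (hs : 0 ≤ s) (hst : |s * t| ≤ c) (hc : c ≤ 1) :
    (1 - c) * s * t ^ 2 ≤ t * (exp (s * t) - 1) := by
  have hrem : |t * (exp (s * t) - 1 - s * t)| ≤ c * s * t ^ 2 :=
    calc |t * (exp (s * t) - 1 - s * t)| = |t| * |exp (s * t) - 1 - s * t| := abs_mul _ _
      _ ≤ |t| * (s * t) ^ 2 := by gcongr; exact abs_exp_sub_one_sub_id_le (hst.trans hc)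
      _ = |s * t| * s * t ^ 2 := by rw [abs_mul, abs_of_nonneg hs]; ring
      _ ≤ c * s * t ^ 2 := by gcongr
  have hsplit : t * (exp (s * t) - 1) = s * t ^ 2 + t * (exp (s * t) - 1 - s * t) := by ring
  rw [hsplit]
  linarith [neg_abs_le (t * (exp (s * t) - 1 - s * t))]

lemma mul_exp_mul_sign_mul_sub_one_nonneg {s c : ℝ} (hs : 0 ≤ s) (hc : 0 ≤ c) (t : ℝ) :
    0 ≤ t * (exp (s * (Real.sign t * c)) - 1) := by
  rcases lt_trichotomy t 0 with ht | rfl | ht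
  · rw [Real.sign_of_neg ht]
    exact mul_nonneg_of_nonpos_of_nonpos ht.le
      (sub_nonpos.2 (exp_le_one_iff.2 (by nlinarith)))
  · simp
  · rw [Real.sign_of_pos ht]
    exact mul_nonneg ht.le (sub_nonneg.2 (one_le_exp (by nlinarith)))

def signTrunc (M c y : ℝ) : ℝ := if |y| ≤ M then y else Real.sign y * c

lemma measurable_signTrunc (M c : ℝ) : Measurable (signTrunc M c) := by
  have hsign : Measurable Real.sign :=
    Measurable.ite measurableSet_Iio measurable_const
      (Measurable.ite measurableSet_Ioi measurable_const measurable_const)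
  exact Measurable.ite (measurableSet_le measurable_abs measurable_const) measurable_id
    (hsign.mul measurable_const)

lemma abs_signTrunc_le {M c : ℝ} (hc : 0 ≤ c) (hcM : c ≤ M) (y : ℝ) : |signTrunc M c y| ≤ M := by
  unfold signTrunc
  split_ifs with hy
  · exact hy
  · rcases Real.sign_apply_eq y with hsign | hsign | hsign <;> simp [hsign, abs_of_nonneg hc, hcM, hc.trans hcM]

lemma exp_mul_signTrunc_le {s M c : ℝ} (hs : 0 ≤ s) (hc : 0 ≤ c) (hcM : c ≤ M) (y : ℝ) :
    exp (s * signTrunc M c y) ≤ exp (s * M) :=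
  exp_le_exp.2 (mul_le_mul_of_nonneg_left ((le_abs_self _).trans (abs_signTrunc_le hc hcM y)) hs)

lemma mul_exp_signTrunc_sub_one_ge {s M c : ℝ} (hs : 0 ≤ s) (hM : 0 < M) (hc : 0 ≤ c)
    (hsM : s * M ≤ 1) (y : ℝ) :
    (1 - s * M) * s * (y ^ 2 - y ^ 4 / M ^ 2) ≤ y * (exp (s * signTrunc M c y) - 1) := by
  have hcoef : 0 ≤ (1 - s * M) * s := mul_nonneg (by linarith) hs
  unfold signTrunc
  split_ifs with hy
  · calc (1 - s * M) * s * (y ^ 2 - y ^ 4 / M ^ 2) ≤ (1 - s * M) * s * y ^ 2 := by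
          gcongr; exact sub_le_self _ (by positivity)
      _ ≤ y * (exp (s * y) - 1) := mul_exp_mul_sub_one_ge hs
          (by rw [abs_mul, abs_of_nonneg hs]; gcongr) hsM
  · have htail : y ^ 2 ≤ y ^ 4 / M ^ 2 := by
      rw [le_div_iff₀ (by positivity)]
      have : M ^ 2 ≤ y ^ 2 := by rw [← sq_abs y]; gcongr; linarith
      nlinarith [sq_nonneg y]
    exact (mul_nonpos_of_nonneg_of_nonpos hcoef (by linarith)).trans
      (mul_exp_mul_sign_mul_sub_one_nonneg hs hc y)

section Integrals

variable {X : Type*} [MeasurableSpace X] {P : Measure X}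

lemma sq_integral_le_integral_sq [IsProbabilityMeasure P] {f : X → ℝ} (hf : MemLp f 2 P) :
    (∫ x, f x ∂P) ^ 2 ≤ ∫ x, f x ^ 2 ∂P := by
  have := variance_nonneg f P
  rw [variance_eq_sub hf] at this
  simpa using this

lemma MeasureTheory.MemLp.integrable_pow_four {h : X → ℝ} (hh : MemLp h 4 P) :
    Integrable (fun x => h x ^ 4) P := by
  simpa [Real.norm_eq_abs, Even.pow_abs ⟨2, rfl⟩] using hh.integrable_norm_pow (by norm_num)

lemma one_le_sqrt_integral_pow_four_div_integral_sq [IsProbabilityMeasure P] {h : X → ℝ}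
    (hh : MemLp h 4 P) (hpos : 0 < ∫ x, h x ^ 2 ∂P) :
    1 ≤ sqrt (∫ x, h x ^ 4 ∂P) / ∫ x, h x ^ 2 ∂P := by
  have hsq : MemLp (fun x => h x ^ 2) 2 P := by
    refine (memLp_two_iff_integrable_sq (hh.aestronglyMeasurable.pow 2)).2 ?_
    simpa only [Pi.pow_apply, ← pow_mul] using hh.integrable_pow_four
  rw [one_le_div hpos, le_sqrt hpos.le (integral_nonneg fun x => by positivity)]
  simpa only [← pow_mul] using sq_integral_le_integral_sq hsq

variable {h : X → ℝ} {s M c : ℝ}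

lemma integrable_exp_mul_signTrunc [IsFiniteMeasure P] (hh : AEMeasurable h P) (hs : 0 ≤ s)
    (hc : 0 ≤ c) (hcM : c ≤ M) : Integrable (fun x => exp (s * signTrunc M c (h x))) P :=
  (integrable_const (exp (s * M))).mono'
    (((measurable_signTrunc M c).comp_aemeasurable hh).const_mul s).exp.aestronglyMeasurable
    (ae_of_all _ fun x => by
      rw [norm_of_nonneg (exp_pos _).le]; exact exp_mul_signTrunc_le hs hc hcM _)

lemma integral_exp_mul_signTrunc_le [IsProbabilityMeasure P] (hh : AEMeasurable h P)
    (hs : 0 ≤ s) (hc : 0 ≤ c) (hcM : c ≤ M) :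
    ∫ x, exp (s * signTrunc M c (h x)) ∂P ≤ exp (s * M) := by
  simpa using integral_mono (integrable_exp_mul_signTrunc hh hs hc hcM) (integrable_const _)
    fun x => exp_mul_signTrunc_le hs hc hcM (h x)

lemma integral_mul_exp_signTrunc_ge [IsFiniteMeasure P] (hh : MemLp h 4 P)
    (hcenter : ∫ x, h x ∂P = 0) (hs : 0 ≤ s) (hM : 0 < M) (hc : 0 ≤ c) (hcM : c ≤ M)
    (hsM : s * M ≤ 1) :
    (1 - s * M) * s * (∫ x, h x ^ 2 ∂P - (∫ x, h x ^ 4 ∂P) / M ^ 2)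
      ≤ ∫ x, h x * exp (s * signTrunc M c (h x)) ∂P := by
  have h1 : Integrable h P := hh.integrable (by norm_num)
  have h2 : Integrable (fun x => h x ^ 2) P := (hh.mono_exponent (by norm_num)).integrable_sq
  have h4 : Integrable (fun x => h x ^ 4 / M ^ 2) P := hh.integrable_pow_four.div_const _
  have htilt : Integrable (fun x => h x * exp (s * signTrunc M c (h x))) P :=
    h1.mul_bdd (integrable_exp_mul_signTrunc hh.aemeasurable hs hc hcM).aestronglyMeasurable
      (ae_of_all _ fun x => by
        rw [norm_of_nonneg (exp_pos _).le]; exact exp_mul_signTrunc_le hs hc hcM _)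
  calc (1 - s * M) * s * (∫ x, h x ^ 2 ∂P - (∫ x, h x ^ 4 ∂P) / M ^ 2)
      = ∫ x, (1 - s * M) * s * (h x ^ 2 - h x ^ 4 / M ^ 2) ∂P := by
        rw [integral_const_mul, integral_sub h2 h4, integral_div]
    _ ≤ ∫ x, h x * (exp (s * signTrunc M c (h x)) - 1) ∂P :=
        integral_mono ((h2.sub h4).const_mul _)
          (by simp only [mul_sub, mul_one]; exact htilt.sub h1)
          fun x => mul_exp_signTrunc_sub_one_ge hs hM hc hsM (h x)
    _ = ∫ x, h x * exp (s * signTrunc M c (h x)) ∂P := by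
        simp only [mul_sub, mul_one]
        rw [integral_sub htilt h1, hcenter, sub_zero]

end Integrals

theorem tilted_mean_lower_bound_general
    {X : Type*} [MeasurableSpace X] (P : Measure X) [IsProbabilityMeasure P]
    (h : X → ℝ) (hh_L4 : MemLp h 4 P)
    (hcenter : ∫ x, h x ∂P = 0)
    (hpos : 0 < ∫ x, (h x) ^ 2 ∂P)
    -- the (2,4)-moment ratio H and the L²-norm ‖h‖
    (H nh : ℝ)
    (hH : H = Real.sqrt (∫ x, (h x) ^ 4 ∂P) / ∫ x, (h x) ^ 2 ∂P)
    (hnh : nh = Real.sqrt (∫ x, (h x) ^ 2 ∂P))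
    -- the truncation h̃ of h
    (htil : X → ℝ)
    (hhtil : ∀ x, htil x = if |h x| ≤ 2 * H * nh then h x else Real.sign (h x) * nh)
    (n : ℕ) (hn : 16 * H ^ 2 ≤ (n : ℝ))
    (s : ℝ) (hs : s = 1 / (4 * nh * Real.sqrt n)) :
    nh / (16 * Real.sqrt n) ≤ ∫ x, h x * Real.exp (s * htil x) ∂P
      ∧ nh / (24 * Real.sqrt n)
        ≤ (∫ x, h x * Real.exp (s * htil x) ∂P) / ∫ x, Real.exp (s * htil x) ∂P := by
  obtain rfl : htil = fun x => signTrunc (2 * H * nh) nh (h x) := funext hhtil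
  have hnh0 : 0 < nh := hnh ▸ sqrt_pos.2 hpos
  have hnh_sq : nh ^ 2 = ∫ x, h x ^ 2 ∂P := hnh ▸ sq_sqrt hpos.le
  have hH1 : 1 ≤ H := hH ▸ one_le_sqrt_integral_pow_four_div_integral_sq hh_L4 hpos
  have hH0 : 0 < H := by linarith
  have htail : (∫ x, h x ^ 4 ∂P) / (2 * H * nh) ^ 2 = nh ^ 2 / 4 := by
    have h4 : ∫ x, h x ^ 4 ∂P = (H * nh ^ 2) ^ 2 := by
      rw [hnh_sq, hH, div_mul_cancel₀ _ hpos.ne', sq_sqrt (integral_nonneg fun x => by positivity)]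
    rw [h4]; field_simp; ring
  have hsqrt_n : 4 * H ≤ sqrt n := (le_sqrt (by positivity) (Nat.cast_nonneg n)).2 (by linarith)
  have hsqrt_pos : 0 < sqrt n := by linarith
  have hsM : s * (2 * H * nh) ≤ 1 / 8 := by
    rw [hs, div_mul_eq_mul_div, one_mul, div_le_div_iff₀ (by positivity) (by norm_num)]
    nlinarith
  have hs0 : 0 < s := by rw [hs]; positivity
  have hsnh : s * nh ^ 2 = nh / (4 * sqrt n) := by rw [hs]; field_simp
  have hcM : nh ≤ 2 * H * nh := by nlinarith
  have hfirst : nh / (16 * sqrt n) ≤ ∫ x, h x * exp (s * signTrunc (2 * H * nh) nh (h x)) ∂P :=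
    calc nh / (16 * sqrt n) = 1 / 4 * (s * nh ^ 2) := by rw [hsnh]; ring
      _ ≤ (1 - s * (2 * H * nh)) * s
            * (∫ x, h x ^ 2 ∂P - (∫ x, h x ^ 4 ∂P) / (2 * H * nh) ^ 2) := by
          rw [htail, ← hnh_sq]; nlinarith [mul_pos hs0 (pow_pos hnh0 2)]
      _ ≤ _ := integral_mul_exp_signTrunc_ge hh_L4 hcenter hs0.le (by positivity) hnh0.le hcM
          (by linarith)
  have hZ_pos :=
    integral_exp_pos (integrable_exp_mul_signTrunc hh_L4.aemeasurable hs0.le hnh0.le hcM)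
  have hZ_le : ∫ x, exp (s * signTrunc (2 * H * nh) nh (h x)) ∂P ≤ 3 / 2 :=
    (integral_exp_mul_signTrunc_le hh_L4.aemeasurable hs0.le hnh0.le hcM).trans <|
      (exp_bound_div_one_sub_of_interval (by positivity) (by linarith)).trans
        (by rw [div_le_iff₀ (by linarith)]; linarith)
  refine ⟨hfirst, ?_⟩
  calc nh / (24 * sqrt n) = nh / (16 * sqrt n) / (3 / 2) := by ring
    _ ≤ _ := div_le_div₀ ((div_nonneg hnh0.le (by positivity)).trans hfirst) hfirst hZ_pos hZ_le

/-- lower bound on the tilted first moment of a centered function with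
bounded (2,4)-moment ratio (the key separation estimate in the proof of Lemma 3). -/
theorem tilted_mean_lower_bound
    {X : Type*} [MeasurableSpace X] (P : Measure X) [IsProbabilityMeasure P]
    (h : X → ℝ) (hh_meas : Measurable h) (hh_L4 : MemLp h 4 P)
    (hcenter : ∫ x, h x ∂P = 0)
    (hpos : 0 < ∫ x, (h x) ^ 2 ∂P)
    -- the (2,4)-moment ratio H and the L²-norm ‖h‖
    (H nh : ℝ)
    (hH : H = Real.sqrt (∫ x, (h x) ^ 4 ∂P) / ∫ x, (h x) ^ 2 ∂P)
    (hnh : nh = Real.sqrt (∫ x, (h x) ^ 2 ∂P))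
    -- the truncation h̃ of h
    (htil : X → ℝ)
    (hhtil : ∀ x, htil x = if |h x| ≤ 2 * H * nh then h x else Real.sign (h x) * nh)
    (n : ℕ) (hn : 16 * H ^ 2 ≤ (n : ℝ))
    (s : ℝ) (hs : s = 1 / (4 * nh * Real.sqrt n)) :
    nh / (16 * Real.sqrt n) ≤ ∫ x, h x * Real.exp (s * htil x) ∂P
      ∧ nh / (24 * Real.sqrt n)
        ≤ (∫ x, h x * Real.exp (s * htil x) ∂P) / ∫ x, Real.exp (s * htil x) ∂P :=
  tilted_mean_lower_bound_general P h hh_L4 hcenter hpos H nh hH hnh htil hhtil n hn s hs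
end
end

section
/- Let S be a set, L > 0, n ∈ ℕ, and F a class of functions S → [−L,L]. Let Rel be a real-valued function on pairs of finite sequences ((s_1,…,s_k),(y_1,…,y_k)) with s_j ∈ S, y_j ∈ [−L,L], 0 ≤ k ≤ n, satisfying the initial condition Rel(s_{1:n}, y_{1:n}) ≥ − inf_{μ∈F} Σ_{i=1}^n (y_i − μ(s_i))² for all such length-n sequences. Suppose given data s_1,…,s_n ∈ S and y_1,…,y_n ∈ [−L,L], the predictions ŷ_1,…,ŷ_n ∈ [−L,L] satisfy, for every i ∈ [n], sup_{y ∈ [−L,L]} { (ŷ_i − y)² + Rel(s_{1:i}, (y_{1:i−1}, y)) } ≤ Rel(s_{1:i−1}, y_{1:i−1}). Then the regret is bounded by the relaxation at the empty sequence: Σ_{i=1}^n (ŷ_i − y_i)² − inf_{μ∈F} Σ_{i=1}^n (y_i − μ(s_i))² ≤ Rel(∅, ∅). -/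
/-! Along the data, admissibility says that the loss of round `i` is paid for by the drop of the
relaxation from `Rel(s_{1:i-1}, y_{1:i-1})` to `Rel(s_{1:i}, y_{1:i})`. Summing over the rounds
telescopes to `Rel(∅, ∅) - Rel(s, y)`, and the initial condition bounds `-Rel(s, y)` by the infimal
loss over `F`. -/

theorem Fin.sum_add_le_of_forall_add_succ_le {M : Type*} [AddCommMonoid M] [PartialOrder M]
    [IsOrderedAddMonoid M] {n : ℕ} (ℓ : Fin n → M) (R : Fin (n + 1) → M)
    (h : ∀ i : Fin n, ℓ i + R i.succ ≤ R i.castSucc) :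
    ∑ i, ℓ i + R (Fin.last n) ≤ R 0 := by
  induction n with
  | zero => simp
  | succ n ih =>
    have ih' := ih (fun i => ℓ i.castSucc) (fun k => R k.castSucc)
      (fun i => by simpa only [Fin.succ_castSucc] using h i.castSucc)
    calc ∑ i, ℓ i + R (Fin.last (n + 1))
        = ∑ i : Fin n, ℓ i.castSucc + (ℓ (Fin.last n) + R (Fin.last n).succ) := by
          rw [Fin.sum_univ_castSucc, add_assoc, Fin.succ_last]
      _ ≤ ∑ i : Fin n, ℓ i.castSucc + R (Fin.last n).castSucc := by
          gcongr; exact h (Fin.last n)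
      _ ≤ R 0 := by simpa only [Fin.castSucc_zero] using ih'

theorem relaxation_regret_bound_general
    {S : Type*} (L : ℝ) (n : ℕ)
    -- the function class F ⊆ (S → [-L, L])
    (F : Set (S → ℝ))
    -- the relaxation, defined on pairs of finite sequences of each length k
    (Rel : (k : ℕ) → (Fin k → S) → (Fin k → ℝ) → ℝ)
    -- initial condition
    (hinit : ∀ (sseq : Fin n → S) (yseq : Fin n → ℝ),
      (∀ i, yseq i ∈ Set.Icc (-L) L) →
      -sInf ((fun μ => ∑ i : Fin n, (yseq i - μ (sseq i)) ^ 2) '' F) ≤ Rel n sseq yseq)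
    -- the observed data and predictions
    (s : Fin n → S) (y : Fin n → ℝ) (hy : ∀ i, y i ∈ Set.Icc (-L) L)
    (yhat : Fin n → ℝ)
    -- the admissibility condition along the data:
    -- sup over y ∈ [-L,L] of {(ŷ_i − y)² + Rel(s_{1:i}, (y_{1:i-1}, y))} ≤ Rel(s_{1:i-1}, y_{1:i-1})
    (hadm : ∀ (i : Fin n), ∀ yy ∈ Set.Icc (-L) L,
      (yhat i - yy) ^ 2
          + Rel ((i : ℕ) + 1) (fun j : Fin ((i : ℕ) + 1) => s (Fin.castLE i.isLt j))
              (Fin.snoc (fun j : Fin (i : ℕ) => y (Fin.castLE i.isLt.le j)) yy)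
        ≤ Rel (i : ℕ) (fun j : Fin (i : ℕ) => s (Fin.castLE i.isLt.le j))
            (fun j : Fin (i : ℕ) => y (Fin.castLE i.isLt.le j))) :
    (∑ i : Fin n, (yhat i - y i) ^ 2)
        - sInf ((fun μ => ∑ i : Fin n, (y i - μ (s i)) ^ 2) '' F)
      ≤ Rel 0 Fin.elim0 Fin.elim0 := by
  set R : Fin (n + 1) → ℝ := fun k => Rel k (Fin.take k k.is_le s) (Fin.take k k.is_le y)
  have step (i : Fin n) : (yhat i - y i) ^ 2 + R i.succ ≤ R i.castSucc := by
    have h : (yhat i - y i) ^ 2 + Rel (i + 1) (Fin.take (i + 1) i.isLt s)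
          (Fin.snoc (Fin.take i i.isLt.le y) (y i))
        ≤ Rel i (Fin.take i i.isLt.le s) (Fin.take i i.isLt.le y) :=
      hadm i (y i) (hy i)
    rwa [← Fin.take_succ_eq_snoc] at h
  have telescope := Fin.sum_add_le_of_forall_add_succ_le _ R step
  have hlast : R (Fin.last n) = Rel n s y := by simp only [R, Fin.val_last, Fin.take_eq_self]
  have hfirst : R 0 = Rel 0 Fin.elim0 Fin.elim0 := by simp [R]
  linarith [hinit s y hy]

/-- regret bound for a generic forecaster based on an admissible relaxation
(the relaxation recipe of Rakhlin–Shamir–Sridharan). -/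
theorem relaxation_regret_bound
    {S : Type*} (L : ℝ) (hL : 0 < L) (n : ℕ)
    -- the function class F ⊆ (S → [-L, L])
    (F : Set (S → ℝ)) (hF_ne : F.Nonempty)
    (hF_range : ∀ μ ∈ F, ∀ x, μ x ∈ Set.Icc (-L) L)
    -- the relaxation, defined on pairs of finite sequences of each length k
    (Rel : (k : ℕ) → (Fin k → S) → (Fin k → ℝ) → ℝ)
    -- initial condition
    (hinit : ∀ (sseq : Fin n → S) (yseq : Fin n → ℝ),
      (∀ i, yseq i ∈ Set.Icc (-L) L) →
      -sInf ((fun μ => ∑ i : Fin n, (yseq i - μ (sseq i)) ^ 2) '' F) ≤ Rel n sseq yseq)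
    -- the observed data and predictions
    (s : Fin n → S) (y : Fin n → ℝ) (hy : ∀ i, y i ∈ Set.Icc (-L) L)
    (yhat : Fin n → ℝ) (hyhat : ∀ i, yhat i ∈ Set.Icc (-L) L)
    -- the admissibility condition along the data:
    -- sup over y ∈ [-L,L] of {(ŷ_i − y)² + Rel(s_{1:i}, (y_{1:i-1}, y))} ≤ Rel(s_{1:i-1}, y_{1:i-1})
    (hadm : ∀ (i : Fin n), ∀ yy ∈ Set.Icc (-L) L,
      (yhat i - yy) ^ 2
          + Rel ((i : ℕ) + 1) (fun j : Fin ((i : ℕ) + 1) => s (Fin.castLE i.isLt j))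
              (Fin.snoc (fun j : Fin (i : ℕ) => y (Fin.castLE i.isLt.le j)) yy)
        ≤ Rel (i : ℕ) (fun j : Fin (i : ℕ) => s (Fin.castLE i.isLt.le j))
            (fun j : Fin (i : ℕ) => y (Fin.castLE i.isLt.le j))) :
    (∑ i : Fin n, (yhat i - y i) ^ 2)
        - sInf ((fun μ => ∑ i : Fin n, (y i - μ (s i)) ^ 2) '' F)
      ≤ Rel 0 Fin.elim0 Fin.elim0 :=
  relaxation_regret_bound_general L n F Rel hinit s y hy yhat hadm
end
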